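/- arXiv:2206.00320 — 7 statements merged into one kernel-verified Lean document; each statement's English description precedes it below -/
import Mathlib

section
/- For any a ∈ (0,1), b ∈ ℝ, any measurable function t ↦ t^{a+b−1} E_{a,a+b}(−λ t^a) with λ > 0 satisfies: if a + b = 1 then its derivative at t > 0 equals −λ t^{a−1} E_{a,a}(−λ t^a), and if a + b ≠ 1 then its derivative equals t^{a+b−2} E_{a,a+b−1}(−λ t^a). -/
/-!
Expanding termwise, `u^(c-1) E_{a,c}(μ u^a) = ∑ μ^k u^(ak+c-1) / Γ(ak+c)`, and
`d/du (u^p / Γ(p+1)) = u^(p-1) / Γ(p)`, so the derivative is `u^(c-2) E_{a,c-1}(μ u^a)` for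
every `c`. Differentiating under the sum is justified on `(t/2, 2t)` by the absolute convergence
of `∑ r^k / Γ(ak+b)`, which comes from the lower bound `q^(x-2) ≤ Γ(x)` for large `x`.
For `c = 1` the term `1/Γ(0) = 0` drops out (Mathlib's `Gamma 0 = 0` matches this convention), and
shifting the index gives `E_{a,0}(z) = z E_{a,a}(z)`.
-/

/-- The Mittag--Leffler function `E_{a,b}(z) = ∑_{k=0}^∞ z^k / Γ(a k + b)`. -/
noncomputable def mittagLeffler (a b z : ℝ) : ℝ :=
  ∑' k : ℕ, z ^ k / Real.Gamma (a * k + b)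

open Filter Real

lemma eventually_rpow_sub_two_le_Gamma {q : ℝ} (hq : 1 ≤ q) :
    ∀ᶠ x : ℝ in atTop, q ^ (x - 2) ≤ Gamma x := by
  obtain ⟨M, hM⟩ := eventually_atTop.mp
    ((FloorSemiring.tendsto_pow_div_factorial_atTop q).eventually (gt_mem_nhds one_pos))
  filter_upwards [eventually_ge_atTop ((M : ℝ) + 3)] with x hx
  have hM0 : (0 : ℝ) ≤ M := M.cast_nonneg
  obtain ⟨n, hn⟩ : ∃ n : ℕ, ⌊x⌋₊ = n + 1 :=
    Nat.exists_eq_add_one.mpr (Nat.floor_pos.mpr (by linarith))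
  have hnx : (n : ℝ) + 1 ≤ x := by exact_mod_cast hn ▸ Nat.floor_le (by linarith)
  have hxn : x < n + 2 := by
    have := Nat.lt_floor_add_one x
    rw [hn] at this
    push_cast at this
    linarith
  have hMn : M ≤ n := by exact_mod_cast (show (M : ℝ) ≤ n by linarith)
  calc q ^ (x - 2) ≤ q ^ (n : ℝ) := rpow_le_rpow_of_exponent_le hq (by linarith)
    _ = q ^ n := rpow_natCast q n
    _ ≤ n.factorial := ((div_lt_one (by positivity)).mp (hM n hMn)).le
    _ = Gamma (n + 1) := (Gamma_nat_eq_factorial n).symm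
    _ ≤ Gamma x := Gamma_strictMonoOn_Ici.monotoneOn (by simp; linarith) (by simp; linarith) hnx

lemma summable_pow_div_abs_Gamma {a : ℝ} (ha : 0 < a) (b r : ℝ) :
    Summable fun k : ℕ => r ^ k / |Gamma (a * k + b)| := by
  set s := |r| + 1
  have hs : 0 < s := by positivity
  set q := s ^ a⁻¹
  have hq : 1 ≤ q := one_le_rpow (by simp [s]) (by positivity)
  have hq0 : 0 < q := by linarith
  have hqa : q ^ a = s := by rw [← rpow_mul hs.le, inv_mul_cancel₀ ha.ne', rpow_one]
  have hlin : Tendsto (fun k : ℕ => a * k + b) atTop atTop :=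
    tendsto_atTop_add_const_right _ _ (tendsto_natCast_atTop_atTop.const_mul_atTop ha)
  refine Summable.of_norm_bounded_eventually
    ((summable_geometric_of_lt_one (div_nonneg (abs_nonneg r) hs.le)
      ((div_lt_one hs).mpr (by simp [s]))).mul_left (q ^ (2 - b))) ?_
  rw [Nat.cofinite_eq_atTop]
  filter_upwards [hlin.eventually (eventually_rpow_sub_two_le_Gamma hq)] with k hk
  have hpow : q ^ (a * k + b - 2) = s ^ k * (q ^ (2 - b))⁻¹ := by
    rw [← rpow_neg hq0.le, show a * k + b - 2 = a * k + -(2 - b) by ring, rpow_add hq0,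
      rpow_mul hq0.le, hqa, rpow_natCast]
  have hΓ : 0 < Gamma (a * k + b) := (rpow_pos_of_pos hq0 _).trans_le hk
  rw [norm_div, norm_pow, Real.norm_eq_abs, Real.norm_eq_abs, abs_abs, abs_of_pos hΓ]
  calc |r| ^ k / Gamma (a * k + b) ≤ |r| ^ k / q ^ (a * k + b - 2) :=
        div_le_div_of_nonneg_left (by positivity) (rpow_pos_of_pos hq0 _) hk
    _ = q ^ (2 - b) * (|r| / s) ^ k := by
        rw [hpow, div_pow]; field_simp

lemma summable_mittagLeffler {a : ℝ} (ha : 0 < a) (b z : ℝ) :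
    Summable fun k : ℕ => z ^ k / Gamma (a * k + b) :=
  .of_norm <| (summable_pow_div_abs_Gamma ha b |z|).congr fun k => by
    rw [norm_div, norm_pow, Real.norm_eq_abs, Real.norm_eq_abs]

lemma rpow_mul_pow_div_Gamma {a u : ℝ} (hu : 0 < u) (b e μ : ℝ) (k : ℕ) :
    u ^ e * ((μ * u ^ a) ^ k / Gamma (a * k + b)) =
      μ ^ k * u ^ (a * k + e) / Gamma (a * k + b) := by
  rw [rpow_add hu, rpow_mul hu.le, rpow_natCast, mul_pow]
  ring

lemma rpow_mul_mittagLeffler {a u : ℝ} (hu : 0 < u) (b e μ : ℝ) :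
    u ^ e * mittagLeffler a b (μ * u ^ a) =
      ∑' k : ℕ, μ ^ k * u ^ (a * k + e) / Gamma (a * k + b) := by
  rw [mittagLeffler, ← tsum_mul_left]
  exact tsum_congr (rpow_mul_pow_div_Gamma hu b e μ)

lemma hasDerivAt_rpow_div_Gamma_add_one (p : ℝ) {t : ℝ} (ht : 0 < t) :
    HasDerivAt (fun u => u ^ p / Gamma (p + 1)) (t ^ (p - 1) / Gamma p) t := by
  have hΓ : p / Gamma (p + 1) = (Gamma p)⁻¹ := by
    rcases eq_or_ne p 0 with rfl | hp
    · simp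
    · rw [Gamma_add_one hp, div_mul_cancel_left₀ hp]
  refine ((hasDerivAt_rpow_const (p := p) (Or.inl ht.ne')).div_const _).congr_deriv ?_
  rw [mul_div_right_comm, hΓ, div_eq_inv_mul]

lemma rpow_le_rpow_add_rpow {x y z : ℝ} (hx : 0 < x) (hxy : x ≤ y) (hyz : y ≤ z) (p : ℝ) :
    y ^ p ≤ x ^ p + z ^ p := by
  rcases le_total 0 p with hp | hp
  · linarith [rpow_le_rpow (hx.le.trans hxy) hyz hp, rpow_nonneg hx.le p]
  · linarith [rpow_le_rpow_of_nonpos hx hxy hp, rpow_nonneg (hx.le.trans (hxy.trans hyz)) p]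

theorem hasDerivAt_rpow_mul_mittagLeffler {a : ℝ} (ha : 0 < a) (c μ : ℝ) {t : ℝ} (ht : 0 < t) :
    HasDerivAt (fun u => u ^ (c - 1) * mittagLeffler a c (μ * u ^ a))
      (t ^ (c - 2) * mittagLeffler a (c - 1) (μ * t ^ a)) t := by
  set S := Set.Ioo (t / 2) (2 * t)
  have htS : t ∈ S := ⟨by linarith, by linarith⟩
  have hS0 : ∀ y ∈ S, 0 < y := fun y hy => (half_pos ht).trans hy.1
  let g : ℕ → ℝ → ℝ := fun k u => μ ^ k * u ^ (a * k + (c - 1)) / Gamma (a * k + c)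
  let g' : ℕ → ℝ → ℝ := fun k u => μ ^ k * u ^ (a * k + (c - 2)) / Gamma (a * k + (c - 1))
  have hg : ∀ k, ∀ y ∈ S, HasDerivAt (g k) (g' k y) y := fun k y hy => by
    have h := (hasDerivAt_rpow_div_Gamma_add_one (a * k + (c - 1)) (hS0 y hy)).const_mul (μ ^ k)
    rw [show a * k + (c - 1) + 1 = a * k + c by ring,
      show a * k + (c - 1) - 1 = a * k + (c - 2) by ring] at h
    simpa only [g, g', mul_div_assoc] using h
  have hbound : ∀ k, ∀ y ∈ S, ‖g' k y‖ ≤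
      ((t / 2) ^ (c - 2) + (2 * t) ^ (c - 2)) *
        ((|μ| * (2 * t) ^ a) ^ k / |Gamma (a * k + (c - 1))|) := by
    intro k y hy
    have hy0 := hS0 y hy
    have hya : y ^ a ≤ (2 * t) ^ a := rpow_le_rpow hy0.le hy.2.le ha.le
    have hyc := rpow_le_rpow_add_rpow (half_pos ht) hy.1.le hy.2.le (c - 2)
    rw [norm_div, norm_mul, norm_pow, Real.norm_eq_abs, Real.norm_eq_abs, Real.norm_eq_abs,
      abs_of_pos (rpow_pos_of_pos hy0 _), rpow_add hy0, rpow_mul hy0.le, rpow_natCast, mul_pow]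
    calc |μ| ^ k * ((y ^ a) ^ k * y ^ (c - 2)) / |Gamma (a * k + (c - 1))|
        = |μ| ^ k * (y ^ a) ^ k * y ^ (c - 2) / |Gamma (a * k + (c - 1))| := by ring
      _ ≤ |μ| ^ k * ((2 * t) ^ a) ^ k * ((t / 2) ^ (c - 2) + (2 * t) ^ (c - 2)) /
          |Gamma (a * k + (c - 1))| := by gcongr
      _ = _ := by ring
  have hsum : Summable fun k => g k t :=
    ((summable_mittagLeffler ha c (μ * t ^ a)).mul_left (t ^ (c - 1))).congr
      (rpow_mul_pow_div_Gamma ht c (c - 1) μ)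
  have H := hasDerivAt_tsum_of_isPreconnected ((summable_pow_div_abs_Gamma ha _ _).mul_left _)
    isOpen_Ioo (convex_Ioo _ _).isPreconnected hg hbound htS hsum htS
  rw [← rpow_mul_mittagLeffler ht] at H
  refine H.congr_of_eventuallyEq ?_
  filter_upwards [isOpen_Ioo.mem_nhds htS] with y hy
  exact rpow_mul_mittagLeffler (hS0 y hy) c (c - 1) μ

lemma mittagLeffler_zero_eq_mul {a : ℝ} (ha : 0 < a) (z : ℝ) :
    mittagLeffler a 0 z = z * mittagLeffler a a z := by
  rw [mittagLeffler, (summable_mittagLeffler ha 0 z).tsum_eq_zero_add, mittagLeffler,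
    ← tsum_mul_left]
  simp only [CharP.cast_eq_zero, mul_zero, add_zero, Gamma_zero, div_zero, zero_add]
  refine tsum_congr fun k => ?_
  rw [pow_succ', Nat.cast_succ, mul_add_one, mul_div_assoc]

theorem stmt_1_general (a b lam t : ℝ) (ha : 0 < a)
    (ht : 0 < t) :
    (a + b = 1 →
      HasDerivAt (fun u : ℝ => u ^ (a + b - 1) * mittagLeffler a (a + b) (-lam * u ^ a))
        (-lam * t ^ (a - 1) * mittagLeffler a a (-lam * t ^ a)) t) ∧
    (a + b ≠ 1 →
      HasDerivAt (fun u : ℝ => u ^ (a + b - 1) * mittagLeffler a (a + b) (-lam * u ^ a))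
        (t ^ (a + b - 2) * mittagLeffler a (a + b - 1) (-lam * t ^ a)) t) := by
  have H := hasDerivAt_rpow_mul_mittagLeffler ha (a + b) (-lam) ht
  refine ⟨fun hab => H.congr_deriv ?_, fun _ => H⟩
  rw [hab, sub_self, mittagLeffler_zero_eq_mul ha, rpow_sub_one ht.ne',
    show (1 : ℝ) - 2 = -1 by norm_num, rpow_neg_one]
  ring

theorem stmt_1 (a b lam t : ℝ) (ha : 0 < a) (ha1 : a < 1) (hlam : 0 < lam)
    (ht : 0 < t) :
    (a + b = 1 →
      HasDerivAt (fun u : ℝ => u ^ (a + b - 1) * mittagLeffler a (a + b) (-lam * u ^ a))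
        (-lam * t ^ (a - 1) * mittagLeffler a a (-lam * t ^ a)) t) ∧
    (a + b ≠ 1 →
      HasDerivAt (fun u : ℝ => u ^ (a + b - 1) * mittagLeffler a (a + b) (-lam * u ^ a))
        (t ^ (a + b - 2) * mittagLeffler a (a + b - 1) (-lam * t ^ a)) t) :=
  stmt_1_general a b lam t ha ht
end

section
/- Let a ∈ ℝ, b < 1, c < 1, T > 0 and M ≥ 2 an integer, with t_j = jT/M. Then there exists C = C(a,b,c,T) > 0 such that sup over 2 ≤ m ≤ M of the double sum over 0 ≤ i < j ≤ m−1 of ∫_{t_i}^{t_{i+1}} ∫_{t_j}^{t_{j+1}} (t_m−s)^{−a} (t_m−τ)^{−b} (τ−s)^{−c} dτ ds is bounded by C if a+b+c < 2, by C ln M if a+b+c = 2, and by C M^{a+b+c−2} if a+b+c > 2. -/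
open MeasureTheory intervalIntegral Set

/-!
For `s` in the `i`-th cell, the `τ`-integrals over the later cells add up to at most the integral
over all of `(s, t_m)`, which scales to `(t_m - s) ^ (1 - b - c) · B(1 - c, 1 - b)`. Integrating
`(t_m - s) ^ (-a)` times this over the cells `i < m - 1` leaves
`B(1 - c, 1 - b) · ∫_{T/M}^{t_m} u ^ (1 - a - b - c) du`, which is bounded, at most `log M`, or
`O(M ^ (a + b + c - 2))` according as `a + b + c` is below, equal to, or above `2`.
-/

-- Euler's `B(1 - q, 1 - p)`.
noncomputable def rpowBeta (p q : ℝ) : ℝ := ∫ x in (0:ℝ)..1, (1 - x) ^ (-p) * x ^ (-q)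

lemma rpowBeta_nonneg (p q : ℝ) : 0 ≤ rpowBeta p q :=
  integral_nonneg zero_le_one fun x hx =>
    mul_nonneg (Real.rpow_nonneg (by linarith [hx.2]) _) (Real.rpow_nonneg hx.1 _)

section BetaKernel

variable {p q s w : ℝ}

lemma intervalIntegrable_rpow_sub_mul_rpow_sub (hp : p < 1) (hq : q < 1) (hsw : s < w) :
    IntervalIntegrable (fun τ => (w - τ) ^ (-p) * (τ - s) ^ (-q)) volume s w := by
  obtain ⟨μ, hsμ, hμw⟩ := exists_between hsw
  have hleft : IntervalIntegrable (fun τ => (τ - s) ^ (-q)) volume s μ := by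
    simpa using (intervalIntegrable_rpow' (a := 0) (b := μ - s) (by linarith)).comp_sub_right s
  have hright : IntervalIntegrable (fun τ => (w - τ) ^ (-p)) volume μ w := by
    simpa using ((intervalIntegrable_rpow' (a := 0) (b := w - μ) (r := -p)
      (by linarith)).comp_sub_left w).symm
  refine IntervalIntegrable.trans (b := μ) (hleft.continuousOn_mul ?_) (hright.mul_continuousOn ?_)
  · refine ContinuousOn.rpow_const (by fun_prop) fun τ hτ => Or.inl ?_
    rw [uIcc_of_le (by linarith)] at hτ
    linarith [hτ.2]
  · refine ContinuousOn.rpow_const (by fun_prop) fun τ hτ => Or.inl ?_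
    rw [uIcc_of_le (by linarith)] at hτ
    linarith [hτ.1]

lemma integral_rpow_sub_mul_rpow_sub (p q : ℝ) (hsw : s < w) :
    ∫ τ in s..w, (w - τ) ^ (-p) * (τ - s) ^ (-q) = (w - s) ^ (1 - p - q) * rpowBeta p q := by
  have hL : 0 < w - s := sub_pos.mpr hsw
  have hsub := integral_comp_add_mul (a := 0) (b := 1)
    (fun τ => (w - τ) ^ (-p) * (τ - s) ^ (-q)) hL.ne' s
  simp only [mul_zero, add_zero, mul_one, add_sub_cancel, smul_eq_mul] at hsub
  rw [← mul_inv_cancel_left₀ hL.ne' (∫ τ in s..w, _), ← hsub, rpowBeta,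
    ← intervalIntegral.integral_const_mul, ← intervalIntegral.integral_const_mul]
  refine integral_congr fun x hx => ?_
  rw [uIcc_of_le zero_le_one] at hx
  have h1 : w - (s + (w - s) * x) = (w - s) * (1 - x) := by ring
  have h2 : s + (w - s) * x - s = (w - s) * x := by ring
  simp only [h1, h2]
  rw [Real.mul_rpow hL.le (by linarith [hx.2]), Real.mul_rpow hL.le hx.1,
    show 1 - p - q = 1 + -p + -q by ring, Real.rpow_add hL, Real.rpow_add hL, Real.rpow_one]
  ring

end BetaKernel

lemma intervalIntegrable_sub_rpow_of_lt {x y w : ℝ} (e : ℝ) (hxy : x ≤ y) (hyw : y < w) :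
    IntervalIntegrable (fun s => (w - s) ^ e) volume x y := by
  refine ContinuousOn.intervalIntegrable (ContinuousOn.rpow_const (by fun_prop) fun s hs => ?_)
  rw [uIcc_of_le hxy] at hs
  exact Or.inl (by linarith [hs.2])

section PowerIntegrals

variable {e x y : ℝ}

lemma integral_rpow_le_of_neg_one_lt {T : ℝ} (he : -1 < e) (hx : 0 ≤ x) (hxy : x ≤ y)
    (hyT : y ≤ T) : ∫ u in x..y, u ^ e ≤ T ^ (e + 1) / |e + 1| := by
  calc ∫ u in x..y, u ^ e
      ≤ ∫ u in (0:ℝ)..T, u ^ e := by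
        refine integral_mono_interval hx hxy hyT ?_ (intervalIntegrable_rpow' he)
        filter_upwards [ae_restrict_mem measurableSet_Ioc] with u hu
        exact Real.rpow_nonneg hu.1.le e
    _ = T ^ (e + 1) / |e + 1| := by
        rw [integral_rpow (Or.inl he), Real.zero_rpow (by linarith), sub_zero,
          abs_of_pos (by linarith)]

lemma integral_rpow_le_of_lt_neg_one (he : e < -1) (hx : 0 < x) (hxy : x ≤ y) :
    ∫ u in x..y, u ^ e ≤ x ^ (e + 1) / |e + 1| := by
  have h0 : (0:ℝ) ∉ uIcc x y := by
    rw [uIcc_of_le hxy]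
    exact fun h => hx.not_ge h.1
  have hy : 0 ≤ y ^ (e + 1) := Real.rpow_nonneg (hx.le.trans hxy) _
  rw [integral_rpow (Or.inr ⟨he.ne, h0⟩), abs_of_neg (by linarith), ← neg_div_neg_eq, neg_sub]
  gcongr
  · linarith
  · linarith

end PowerIntegrals

section Partition

variable {t : ℕ → ℝ} {a b c s : ℝ} {m : ℕ}

lemma sum_integral_Ico_rpow_mul_rpow_le (ht : Monotone t) (hb : b < 1) (hc : c < 1) {i : ℕ}
    (him : i + 1 ≤ m) (hs : s ≤ t (i + 1)) (hsm : s < t m) :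
    ∑ j ∈ Finset.Ico (i + 1) m, ∫ τ in t j..t (j + 1), (t m - τ) ^ (-b) * (τ - s) ^ (-c)
      ≤ (t m - s) ^ (1 - b - c) * rpowBeta b c := by
  have hint := intervalIntegrable_rpow_sub_mul_rpow_sub hb hc hsm
  have hcell : ∀ j ∈ Set.Ico (i + 1) m, IntervalIntegrable
      (fun τ => (t m - τ) ^ (-b) * (τ - s) ^ (-c)) volume (t j) (t (j + 1)) := fun j hj =>
    hint.mono_set <| by
      rw [uIcc_of_le (ht j.le_succ), uIcc_of_le hsm.le]
      exact Icc_subset_Icc (hs.trans (ht hj.1)) (ht hj.2)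
  rw [sum_integral_adjacent_intervals_Ico him hcell, ← integral_rpow_sub_mul_rpow_sub b c hsm]
  refine integral_mono_interval hs (ht him) le_rfl ?_ hint
  filter_upwards [ae_restrict_mem measurableSet_Ioc] with τ hτ
  exact mul_nonneg (Real.rpow_nonneg (by linarith [hτ.2]) _)
    (Real.rpow_nonneg (by linarith [hτ.1]) _)

variable (t a b c m) in
noncomputable def cellIntegral (j : ℕ) (s : ℝ) : ℝ :=
  ∫ τ in t j..t (j + 1), (t m - s) ^ (-a) * (t m - τ) ^ (-b) * (τ - s) ^ (-c)

lemma cellIntegral_eq (j : ℕ) (s : ℝ) :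
    cellIntegral t a b c m j s
      = (t m - s) ^ (-a) * ∫ τ in t j..t (j + 1), (t m - τ) ^ (-b) * (τ - s) ^ (-c) := by
  simp only [cellIntegral, mul_assoc, intervalIntegral.integral_const_mul]

lemma cellIntegral_nonneg (ht : Monotone t) {j : ℕ} (hj : j < m) (hs : s ≤ t j) :
    0 ≤ cellIntegral t a b c m j s := by
  rw [cellIntegral_eq]
  refine mul_nonneg (Real.rpow_nonneg ?_ _) (integral_nonneg (ht j.le_succ) fun τ hτ => ?_)
  · linarith [ht hj.le]
  · exact mul_nonneg (Real.rpow_nonneg (by linarith [hτ.2, ht hj]) _)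
      (Real.rpow_nonneg (by linarith [hτ.1]) _)

lemma sum_cellIntegral_le (ht : Monotone t) (hb : b < 1) (hc : c < 1) {i : ℕ}
    (him : i + 1 ≤ m) (hs : s ≤ t (i + 1)) (hsm : s < t m) :
    ∑ j ∈ Finset.Ico (i + 1) m, cellIntegral t a b c m j s
      ≤ rpowBeta b c * (t m - s) ^ (1 - (a + b + c)) := by
  have hpos : 0 < t m - s := sub_pos.mpr hsm
  simp only [cellIntegral_eq, ← Finset.mul_sum]
  calc (t m - s) ^ (-a) * ∑ j ∈ Finset.Ico (i + 1) m,
        ∫ τ in t j..t (j + 1), (t m - τ) ^ (-b) * (τ - s) ^ (-c)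
      ≤ (t m - s) ^ (-a) * ((t m - s) ^ (1 - b - c) * rpowBeta b c) := by
        gcongr
        exact sum_integral_Ico_rpow_mul_rpow_le ht hb hc him hs hsm
    _ = rpowBeta b c * (t m - s) ^ (1 - (a + b + c)) := by
        rw [show 1 - (a + b + c) = -a + (1 - b - c) by ring, Real.rpow_add hpos]
        ring

lemma stronglyMeasurable_cellIntegral (j : ℕ) :
    StronglyMeasurable (cellIntegral t a b c m j) := by
  have hF : StronglyMeasurable fun z : ℝ × ℝ =>
      (t m - z.1) ^ (-a) * (t m - z.2) ^ (-b) * (z.2 - z.1) ^ (-c) :=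
    (by fun_prop : Measurable _).stronglyMeasurable
  -- `∫ τ in x..y` is by definition `∫ τ in Ioc x y - ∫ τ in Ioc y x`.
  exact (hF.integral_prod_right' (ν := volume.restrict (Ioc (t j) (t (j + 1))))).sub
    (hF.integral_prod_right' (ν := volume.restrict (Ioc (t (j + 1)) (t j))))

lemma intervalIntegrable_cellIntegral (ht : StrictMono t) (hb : b < 1) (hc : c < 1) {i j : ℕ}
    (hj : j ∈ Finset.Ico (i + 1) m) :
    IntervalIntegrable (cellIntegral t a b c m j) volume (t i) (t (i + 1)) := by
  obtain ⟨hij, hjm⟩ := Finset.mem_Ico.mp hj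
  have hcell : ∀ s ∈ Icc (t i) (t (i + 1)), s < t m := fun s hs =>
    hs.2.trans_lt (ht (by omega))
  refine ((intervalIntegrable_sub_rpow_of_lt (1 - (a + b + c)) (ht.monotone i.le_succ)
    (ht (show i + 1 < m by omega))).const_mul (rpowBeta b c)).mono_fun
    (stronglyMeasurable_cellIntegral j).aestronglyMeasurable ?_
  rw [uIoc_of_le (ht.monotone i.le_succ)]
  filter_upwards [ae_restrict_mem measurableSet_Ioc] with s hs
  have hs' : s ∈ Icc (t i) (t (i + 1)) := Ioc_subset_Icc_self hs
  have hnonneg : ∀ k ∈ Finset.Ico (i + 1) m, 0 ≤ cellIntegral t a b c m k s := fun k hk =>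
    cellIntegral_nonneg ht.monotone (Finset.mem_Ico.mp hk).2
      (hs'.2.trans (ht.monotone (Finset.mem_Ico.mp hk).1))
  rw [Real.norm_of_nonneg (hnonneg j hj), Real.norm_of_nonneg
    (mul_nonneg (rpowBeta_nonneg b c) (Real.rpow_nonneg (sub_pos.mpr (hcell s hs')).le _))]
  exact (Finset.single_le_sum hnonneg hj).trans
    (sum_cellIntegral_le ht.monotone hb hc (by omega) hs'.2 (hcell s hs'))

lemma sum_integral_cellIntegral_le (ht : StrictMono t) (hb : b < 1) (hc : c < 1) {i : ℕ}
    (him : i + 1 < m) :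
    ∑ j ∈ Finset.Ico (i + 1) m, ∫ s in t i..t (i + 1), cellIntegral t a b c m j s
      ≤ ∫ s in t i..t (i + 1), rpowBeta b c * (t m - s) ^ (1 - (a + b + c)) := by
  rw [← integral_finsetSum fun j hj => intervalIntegrable_cellIntegral ht hb hc hj]
  refine integral_mono_on (ht.monotone i.le_succ)
    (by simpa only [← Finset.sum_apply] using
      IntervalIntegrable.sum _ fun j hj => intervalIntegrable_cellIntegral ht hb hc hj)
    ((intervalIntegrable_sub_rpow_of_lt _ (ht.monotone i.le_succ) (ht him)).const_mul _)
    fun s hs => ?_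
  exact sum_cellIntegral_le ht.monotone hb hc him.le hs.2 (hs.2.trans_lt (ht him))

theorem sum_sum_integral_cells_le (ht : StrictMono t) (hb : b < 1) (hc : c < 1) (m : ℕ) :
    ∑ j ∈ Finset.range m, ∑ i ∈ Finset.range j, ∫ s in t i..t (i + 1),
        ∫ τ in t j..t (j + 1), (t m - s) ^ (-a) * (t m - τ) ^ (-b) * (τ - s) ^ (-c)
      ≤ rpowBeta b c * ∫ u in (t m - t (m - 1))..(t m - t 0), u ^ (1 - (a + b + c)) :=
  calc ∑ j ∈ Finset.range m, ∑ i ∈ Finset.range j,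
        ∫ s in t i..t (i + 1), cellIntegral t a b c m j s
      = ∑ i ∈ Finset.range (m - 1), ∑ j ∈ Finset.Ico (i + 1) m,
        ∫ s in t i..t (i + 1), cellIntegral t a b c m j s :=
        -- `i < j < m` forces `i < m - 1`: the last cell carries no outer integral.
        Finset.sum_comm' fun j i => by simp only [Finset.mem_range, Finset.mem_Ico]; omega
    _ ≤ ∑ i ∈ Finset.range (m - 1),
        ∫ s in t i..t (i + 1), rpowBeta b c * (t m - s) ^ (1 - (a + b + c)) :=
        Finset.sum_le_sum fun i hi =>
          sum_integral_cellIntegral_le ht hb hc (by rw [Finset.mem_range] at hi; omega)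
    _ = rpowBeta b c * ∫ u in (t m - t (m - 1))..(t m - t 0), u ^ (1 - (a + b + c)) := by
        rw [sum_integral_adjacent_intervals fun i hi => (intervalIntegrable_sub_rpow_of_lt _
            (ht.monotone i.le_succ) (ht (by omega))).const_mul _,
          intervalIntegral.integral_const_mul, integral_comp_sub_left (fun u => u ^ _)]

end Partition

lemma sum_sum_integral_uniform_le (a : ℝ) {b c T : ℝ} (hb : b < 1) (hc : c < 1) (hT : 0 < T)
    {M m : ℕ} (hM : 0 < M) (hm : 1 ≤ m) :
    ∑ j ∈ Finset.range m, ∑ i ∈ Finset.range j,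
        ∫ s in (i : ℝ) * T / M..((i + 1 : ℕ) : ℝ) * T / M,
          ∫ τ in (j : ℝ) * T / M..((j + 1 : ℕ) : ℝ) * T / M,
            ((m : ℝ) * T / M - s) ^ (-a) * ((m : ℝ) * T / M - τ) ^ (-b) * (τ - s) ^ (-c)
      ≤ rpowBeta b c * ∫ u in T / M..(m : ℝ) * T / M, u ^ (1 - (a + b + c)) := by
  have hS := sum_sum_integral_cells_le (t := fun k : ℕ => (k : ℝ) * T / M) (a := a)
    (fun k l hkl => by dsimp only; gcongr) hb hc m
  have hgap : (m : ℝ) * T / M - ((m - 1 : ℕ) : ℝ) * T / M = T / M := by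
    rw [Nat.cast_sub hm, Nat.cast_one]; ring
  simpa only [hgap, Nat.cast_zero, zero_mul, zero_div, sub_zero] using hS

theorem stmt_2 (a b c T : ℝ) (hb : b < 1) (hc : c < 1) (hT : 0 < T) :
    ∃ C > (0 : ℝ), ∀ M : ℕ, 2 ≤ M → ∀ m : ℕ, 2 ≤ m → m ≤ M →
      (let tpt : ℕ → ℝ := fun k => (k : ℝ) * T / (M : ℝ)
       let S : ℝ := ∑ j ∈ Finset.range m, ∑ i ∈ Finset.range j,
        ∫ s in tpt i..tpt (i + 1), ∫ τ in tpt j..tpt (j + 1),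
          (tpt m - s) ^ (-a) * (tpt m - τ) ^ (-b) * (τ - s) ^ (-c)
       (a + b + c < 2 → S ≤ C) ∧
       (a + b + c = 2 → S ≤ C * Real.log M) ∧
       (2 < a + b + c → S ≤ C * (M : ℝ) ^ (a + b + c - 2))) := by
  set σ := a + b + c
  set B := rpowBeta b c
  -- `K` bounds `∫ u ^ (1 - σ)` off the critical case (up to the factor `M ^ (σ - 2)` above it).
  set K := T ^ (2 - σ) / |2 - σ| with hKdef
  have hB : 0 ≤ B := rpowBeta_nonneg b c
  have hK : 0 ≤ K := by positivity
  refine ⟨(B + 1) * (K + 1), by positivity, fun M hM m hm hmM => ?_⟩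
  have hM0 : (0 : ℝ) < M := by positivity
  have hstep : (0 : ℝ) < T / M := by positivity
  have hm1 : (1 : ℝ) ≤ m := by exact_mod_cast (by omega : 1 ≤ m)
  have hTm : T / M ≤ (m : ℝ) * T / M := by
    rw [mul_div_assoc]; exact le_mul_of_one_le_left hstep.le hm1
  have hmT : (m : ℝ) * T / M ≤ T := by
    rw [div_le_iff₀ hM0, mul_comm T]; gcongr
  have hS := sum_sum_integral_uniform_le a hb hc hT (M := M) (by omega) (by omega : 1 ≤ m)
  refine ⟨fun hσ => hS.trans ?_, fun hσ => hS.trans ?_, fun hσ => hS.trans ?_⟩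
  · have hI := integral_rpow_le_of_neg_one_lt (e := 1 - σ) (by linarith) hstep.le hTm hmT
    rw [show 1 - σ + 1 = 2 - σ by ring] at hI
    nlinarith [mul_le_mul_of_nonneg_left hI hB]
  · have hratio : (m : ℝ) * T / M / (T / M) = m := by field_simp
    rw [show 1 - σ = -1 by linarith, integral_congr fun u _ => Real.rpow_neg_one u,
      integral_inv_of_pos hstep (hstep.trans_le hTm), hratio]
    exact mul_le_mul (by nlinarith) (Real.log_le_log (by positivity) (by exact_mod_cast hmM))
      (Real.log_nonneg hm1) (by positivity)
  · have hI := integral_rpow_le_of_lt_neg_one (e := 1 - σ) (by linarith) hstep hTm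
    have hpow : (T / M) ^ (2 - σ) / |2 - σ| = K * (M : ℝ) ^ (σ - 2) := by
      rw [Real.div_rpow hT.le hM0.le, hKdef, show σ - 2 = -(2 - σ) by ring,
        Real.rpow_neg hM0.le]
      ring
    rw [show 1 - σ + 1 = 2 - σ by ring, hpow] at hI
    calc B * ∫ u in T / M..(m : ℝ) * T / M, u ^ (1 - σ)
        ≤ B * K * (M : ℝ) ^ (σ - 2) := by rw [mul_assoc]; exact mul_le_mul_of_nonneg_left hI hB
      _ ≤ (B + 1) * (K + 1) * (M : ℝ) ^ (σ - 2) := by gcongr <;> linarith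
end

section
/- Let a, b ∈ (0,1) and T > 0. For the uniform partition t_j = jT/M with h = T/M and M ≥ 2, there exists C = C(a,b,T) > 0, independent of M, such that for every 2 ≤ m ≤ M: ∑_{j=0}^{m−1} ∫_{t_j}^{t_{j+1}} (t_m − s)^{a−1} (s^a − t_j^a) ds ≤ C t_m^{2a−1} h. -/
open MeasureTheory intervalIntegral

lemma aux_split (f : ℕ → ℝ) (k : ℕ) :
    ∑ j ∈ Finset.range (k + 2), f j
      = (∑ j ∈ Finset.range k, f (j + 1)) + f 0 + f (k + 1) := by
  have h0 : ∑ j ∈ Finset.range (k + 2), f j = ∑ j ∈ Finset.range ((k + 1) + 1), f j := rfl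
  rw [h0, Finset.sum_range_succ, Finset.sum_range_succ']

/-- Bernoulli-type inequality: `(s+d)^a ≤ s^a + a s^(a-1) d`. -/
lemma aux_bern {a : ℝ} (ha : 0 ≤ a) (ha1 : a ≤ 1) {s d : ℝ} (hs : 0 < s) (hd : -s ≤ d) :
    (s + d) ^ a ≤ s ^ a + a * s ^ (a - 1) * d := by
  have h2 : (-1 : ℝ) ≤ d / s := (le_div_iff₀ hs).2 (by linarith)
  have h3 : s + d = s * (1 + d / s) := by field_simp
  have h4 : (0:ℝ) ≤ 1 + d / s := by linarith
  have h5 : (1 + d / s) ^ a ≤ 1 + a * (d / s) :=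
    rpow_one_add_le_one_add_mul_self h2 ha ha1
  calc (s + d) ^ a = s ^ a * (1 + d / s) ^ a := by
        rw [h3, Real.mul_rpow hs.le h4]
    _ ≤ s ^ a * (1 + a * (d / s)) :=
        mul_le_mul_of_nonneg_left h5 (Real.rpow_nonneg hs.le a)
    _ = s ^ a + a * s ^ (a - 1) * d := by
        rw [Real.rpow_sub_one hs.ne']
        field_simp

/-- Comparison of powers of comparable quantities. -/
lemma aux_comp {x y p : ℝ} (hx : 0 < x) (hxy : x ≤ y) (hyx : y ≤ 2 * x)
    (hp1 : -1 ≤ p) (hp2 : p ≤ 1) : x ^ p ≤ 2 * y ^ p := by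
  have hy : 0 < y := hx.trans_le hxy
  rcases le_or_gt 0 p with h | h
  · have h1 : x ^ p ≤ y ^ p := Real.rpow_le_rpow hx.le hxy h
    nlinarith [Real.rpow_nonneg hy.le p]
  · have h2 : 0 < y / 2 := by linarith
    have h3 : x ^ p ≤ (y / 2) ^ p :=
      Real.rpow_le_rpow_of_nonpos h2 (by linarith) h.le
    have h5 : (2:ℝ) ^ (-1:ℝ) ≤ 2 ^ p := Real.rpow_le_rpow_of_exponent_le one_le_two hp1
    have h6 : (2:ℝ) ^ (-1:ℝ) = 1/2 := by
      rw [Real.rpow_neg_one]; norm_num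
    have h7 : (0:ℝ) < 2 ^ p := Real.rpow_pos_of_pos two_pos p
    have h8 : 0 ≤ y ^ p := Real.rpow_nonneg hy.le p
    rw [Real.div_rpow hy.le zero_le_two] at h3
    calc x ^ p ≤ y ^ p / 2 ^ p := h3
      _ ≤ 2 * y ^ p := by
          rw [div_le_iff₀ h7]
          have h5' : (1/2 : ℝ) ≤ 2 ^ p := h6 ▸ h5
          have h9 : 0 ≤ y ^ p * (2 ^ p - 1/2) := mul_nonneg h8 (by linarith)
          nlinarith [h9]

lemma aux_sumE {a : ℝ} (ha : 0 < a) (ha1 : a ≤ 1) (k : ℕ) :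
    a * ∑ j ∈ Finset.range k, ((j : ℝ) + 1) ^ (a - 1) ≤ (k : ℝ) ^ a := by
  induction k with
  | zero => simp [Real.zero_rpow ha.ne']
  | succ k ih =>
    rw [Finset.sum_range_succ, mul_add]
    have hb := aux_bern ha.le ha1 (s := (k : ℝ) + 1) (d := -1)
      (by positivity) (by push_cast; linarith [Nat.cast_nonneg (α := ℝ) k])
    have h0 : (k : ℝ) + 1 + -1 = (k : ℝ) := by ring
    rw [h0] at hb
    push_cast
    linarith

lemma aux_sumD {a : ℝ} (ha : 0 < a) (ha1 : a ≤ 1) (k : ℕ) :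
    ∑ j ∈ Finset.range k, ((j : ℝ) + 1) ^ (a - 1) * ((k : ℝ) - (j : ℝ)) ^ (a - 1)
      ≤ (4 / a) * ((k : ℝ) + 1) ^ (2 * a - 1) := by
  set n : ℝ := (k : ℝ) + 1 with hn
  have hn0 : 0 < n := by positivity
  have hkn : (k : ℝ) ≤ n := by simp [hn]
  -- termwise bound
  have hterm : ∀ j ∈ Finset.range k,
      ((j : ℝ) + 1) ^ (a - 1) * ((k : ℝ) - (j : ℝ)) ^ (a - 1)
        ≤ (n / 2) ^ (a - 1) * (((j : ℝ) + 1) ^ (a - 1) + ((k : ℝ) - (j : ℝ)) ^ (a - 1)) := by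
    intro j hj
    have hjk : j < k := Finset.mem_range.mp hj
    set x : ℝ := (j : ℝ) + 1 with hx
    set y : ℝ := (k : ℝ) - (j : ℝ) with hy
    have hx0 : 0 < x := by positivity
    have hy0 : 0 < y := by
      have : (j : ℝ) + 1 ≤ (k : ℝ) := by exact_mod_cast hjk
      simp only [hy]; linarith
    have hxy : x + y = n := by simp [hx, hy, hn]; ring
    have hA : 0 ≤ x ^ (a - 1) := Real.rpow_nonneg hx0.le _
    have hB : 0 ≤ y ^ (a - 1) := Real.rpow_nonneg hy0.le _
    rcases le_total x (n / 2) with hc | hc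
    · have hyn : n / 2 ≤ y := by linarith
      have hCB : y ^ (a - 1) ≤ (n / 2) ^ (a - 1) :=
        Real.rpow_le_rpow_of_nonpos (by linarith) hyn (by linarith)
      have hC : 0 ≤ (n / 2) ^ (a - 1) := Real.rpow_nonneg (by linarith) _
      nlinarith
    · have hCB : x ^ (a - 1) ≤ (n / 2) ^ (a - 1) :=
        Real.rpow_le_rpow_of_nonpos (by linarith) hc (by linarith)
      have hC : 0 ≤ (n / 2) ^ (a - 1) := Real.rpow_nonneg (by linarith) _
      nlinarith
  have hrefl : ∑ j ∈ Finset.range k, ((k : ℝ) - (j : ℝ)) ^ (a - 1)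
      = ∑ j ∈ Finset.range k, ((j : ℝ) + 1) ^ (a - 1) := by
    rw [← Finset.sum_range_reflect (fun j => ((j : ℝ) + 1) ^ (a - 1)) k]
    refine Finset.sum_congr rfl fun j hj => ?_
    have hjk : j < k := Finset.mem_range.mp hj
    congr 1
    have h1 : ((k - 1 - j : ℕ) : ℝ) = (k : ℝ) - 1 - (j : ℝ) := by
      have : (j : ℕ) + 1 ≤ k := hjk
      push_cast [Nat.cast_sub (by omega : 1 + j ≤ k), Nat.sub_sub]
      ring
    rw [h1]; ring
  have hsum1 : a * ∑ j ∈ Finset.range k, ((j : ℝ) + 1) ^ (a - 1) ≤ n ^ a := by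
    calc a * ∑ j ∈ Finset.range k, ((j : ℝ) + 1) ^ (a - 1) ≤ (k : ℝ) ^ a :=
          aux_sumE ha ha1 k
      _ ≤ n ^ a := Real.rpow_le_rpow (Nat.cast_nonneg k) hkn ha.le
  have hsumnn : 0 ≤ ∑ j ∈ Finset.range k, ((j : ℝ) + 1) ^ (a - 1) :=
    Finset.sum_nonneg fun j _ => Real.rpow_nonneg (by positivity) _
  have hC : 0 ≤ (n / 2) ^ (a - 1) := Real.rpow_nonneg (by linarith) _
  calc ∑ j ∈ Finset.range k, ((j : ℝ) + 1) ^ (a - 1) * ((k : ℝ) - (j : ℝ)) ^ (a - 1)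
      ≤ ∑ j ∈ Finset.range k,
          (n / 2) ^ (a - 1) * (((j : ℝ) + 1) ^ (a - 1) + ((k : ℝ) - (j : ℝ)) ^ (a - 1)) :=
        Finset.sum_le_sum hterm
    _ = (n / 2) ^ (a - 1) * (2 * ∑ j ∈ Finset.range k, ((j : ℝ) + 1) ^ (a - 1)) := by
        rw [← Finset.mul_sum, Finset.sum_add_distrib, hrefl]; ring
    _ ≤ (n / 2) ^ (a - 1) * (2 * (n ^ a / a)) := by
        have h1 : ∑ j ∈ Finset.range k, ((j : ℝ) + 1) ^ (a - 1) ≤ n ^ a / a := by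
          rw [le_div_iff₀ ha]; linarith
        have h2 : (0:ℝ) ≤ 2 := by norm_num
        exact mul_le_mul_of_nonneg_left (by linarith) hC
    _ ≤ (2 * n ^ (a - 1)) * (2 * (n ^ a / a)) := by
        have hcomp : (n / 2) ^ (a - 1) ≤ 2 * n ^ (a - 1) :=
          aux_comp (by linarith) (by linarith) (by linarith) (by linarith) (by linarith)
        have hpos : 0 ≤ 2 * (n ^ a / a) := by positivity
        exact mul_le_mul_of_nonneg_right hcomp hpos
    _ = (4 / a) * (n ^ (a - 1) * n ^ a) := by field_simp; ring
    _ = (4 / a) * n ^ (2 * a - 1) := by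
        rw [← Real.rpow_add hn0]; ring_nf

set_option maxHeartbeats 2000000 in
theorem stmt_4 (a b T : ℝ) (ha : 0 < a) (ha1 : a < 1) (hb : 0 < b) (hb1 : b < 1)
    (hT : 0 < T) :
    ∃ C > (0 : ℝ), ∀ M : ℕ, 2 ≤ M → ∀ m : ℕ, 2 ≤ m → m ≤ M →
      (let h : ℝ := T / (M : ℝ)
       let tpt : ℕ → ℝ := fun k => (k : ℝ) * h
       (∑ j ∈ Finset.range m, ∫ s in tpt j..tpt (j + 1),
          (tpt m - s) ^ (a - 1) * (s ^ a - (tpt j) ^ a))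
         ≤ C * (tpt m) ^ (2 * a - 1) * h) := by
  refine ⟨12, by norm_num, ?_⟩
  intro M hM m hm2 hmM
  intro h tpt
  have hM0 : (0 : ℝ) < (M : ℝ) := by
    have : (0 : ℕ) < M := by omega
    exact_mod_cast this
  have hpos : 0 < h := div_pos hT hM0
  have htpt : ∀ j : ℕ, tpt j = (j : ℝ) * h := fun _ => rfl
  obtain ⟨k, rfl⟩ : ∃ k, m = k + 2 := ⟨m - 2, by omega⟩
  have htmono : ∀ {i j : ℕ}, i ≤ j → tpt i ≤ tpt j := by
    intro i j hij
    rw [htpt, htpt]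
    have : (i : ℝ) ≤ (j : ℝ) := by exact_mod_cast hij
    exact mul_le_mul_of_nonneg_right this hpos.le
  have hstep : ∀ j : ℕ, tpt (j + 1) - tpt j = h := by
    intro j; rw [htpt, htpt]; push_cast; ring
  have htpos : ∀ {j : ℕ}, 1 ≤ j → 0 < tpt j := by
    intro j hj
    rw [htpt]
    have : (1 : ℝ) ≤ (j : ℝ) := by exact_mod_cast hj
    nlinarith
  -- continuity of s ↦ s ^ a
  have hca : Continuous fun s : ℝ => s ^ a := by
    rw [continuous_iff_continuousAt]
    intro x
    exact Real.continuousAt_rpow_const x a (Or.inr ha.le)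
  -- integrability of the integrands
  have hbase : ∀ i j : ℕ, IntervalIntegrable
      (fun s : ℝ => (tpt (k + 2) - s) ^ (a - 1)) volume (tpt i) (tpt j) := by
    intro i j
    have h2 := (intervalIntegrable_rpow' (a := tpt (k + 2) - tpt i)
      (b := tpt (k + 2) - tpt j) (by linarith : (-1 : ℝ) < a - 1)).comp_sub_left (tpt (k + 2))
    simpa [sub_sub_cancel] using h2
  have hint : ∀ j : ℕ, IntervalIntegrable
      (fun s => (tpt (k + 2) - s) ^ (a - 1) * (s ^ a - (tpt j) ^ a)) volume
      (tpt j) (tpt (j + 1)) :=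
    fun j => (hbase j (j + 1)).mul_continuousOn ((hca.sub continuous_const).continuousOn)
  -- bound for middle terms
  have hIj : ∀ j : ℕ, 1 ≤ j → j + 1 ≤ k + 1 →
      (∫ s in tpt j..tpt (j + 1), (tpt (k + 2) - s) ^ (a - 1) * (s ^ a - (tpt j) ^ a))
        ≤ h * ((tpt (k + 2) - tpt (j + 1)) ^ (a - 1) * (a * (tpt j) ^ (a - 1) * h)) := by
    intro j hj1 hjk
    have hle : tpt j ≤ tpt (j + 1) := htmono (by omega)
    have htj : 0 < tpt j := htpos hj1
    have hgap : 0 < tpt (k + 2) - tpt (j + 1) := by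
      have h1 : tpt (j + 1) + h ≤ tpt (k + 2) := by
        have h2 : tpt (j + 1 + 1) ≤ tpt (k + 2) := htmono (by omega)
        have h3 := hstep (j + 1)
        linarith
      linarith
    have key : ∀ s ∈ Set.Icc (tpt j) (tpt (j + 1)),
        (tpt (k + 2) - s) ^ (a - 1) * (s ^ a - (tpt j) ^ a)
          ≤ (tpt (k + 2) - tpt (j + 1)) ^ (a - 1) * (a * (tpt j) ^ (a - 1) * h) := by
      intro s hs
      have f1 : (tpt (k + 2) - s) ^ (a - 1) ≤ (tpt (k + 2) - tpt (j + 1)) ^ (a - 1) :=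
        Real.rpow_le_rpow_of_nonpos hgap (by linarith [hs.2]) (by linarith)
      have f2a : 0 ≤ s ^ a - (tpt j) ^ a :=
        sub_nonneg.2 (Real.rpow_le_rpow htj.le hs.1 ha.le)
      have hd : s - tpt j ≤ h := by
        have h2 := hstep j
        linarith [hs.2]
      have hbb := aux_bern ha.le ha1.le htj (d := s - tpt j) (by linarith [hs.1])
      rw [show tpt j + (s - tpt j) = s by ring] at hbb
      have hnn : 0 ≤ a * (tpt j) ^ (a - 1) :=
        mul_nonneg ha.le (Real.rpow_nonneg htj.le _)
      have f2b : s ^ a - (tpt j) ^ a ≤ a * (tpt j) ^ (a - 1) * h := by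
        nlinarith [mul_le_mul_of_nonneg_left hd hnn, hs.1]
      exact mul_le_mul f1 f2b f2a (Real.rpow_nonneg hgap.le _)
    calc (∫ s in tpt j..tpt (j + 1), (tpt (k + 2) - s) ^ (a - 1) * (s ^ a - (tpt j) ^ a))
        ≤ ∫ _s in tpt j..tpt (j + 1),
            (tpt (k + 2) - tpt (j + 1)) ^ (a - 1) * (a * (tpt j) ^ (a - 1) * h) :=
          intervalIntegral.integral_mono_on hle (hint j) intervalIntegrable_const key
      _ = h * ((tpt (k + 2) - tpt (j + 1)) ^ (a - 1) * (a * (tpt j) ^ (a - 1) * h)) := by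
          rw [intervalIntegral.integral_const, smul_eq_mul, hstep j]
  -- first interval
  have h00 : tpt 0 = (0 : ℝ) := by rw [htpt]; norm_num
  have h01 : tpt (0 + 1) = h := by rw [htpt]; norm_num
  have htk1 : 0 < tpt (k + 1) := htpos (by omega)
  have ht2 : 0 < tpt (k + 2) := htpos (by omega)
  have hI0 : (∫ s in (tpt 0)..(tpt (0 + 1)), (tpt (k + 2) - s) ^ (a - 1) * (s ^ a - (tpt 0) ^ a))
      ≤ tpt (k + 1) ^ (a - 1) * h ^ a * h := by
    have hle : tpt 0 ≤ tpt (0 + 1) := htmono (by omega)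
    have hgeq : tpt (k + 2) - tpt (0 + 1) = tpt (k + 1) := by
      rw [htpt, htpt, htpt]; push_cast; ring
    have hgap : 0 < tpt (k + 2) - tpt (0 + 1) := by rw [hgeq]; exact htk1
    have key : ∀ s ∈ Set.Icc (tpt 0) (tpt (0 + 1)),
        (tpt (k + 2) - s) ^ (a - 1) * (s ^ a - (tpt 0) ^ a)
          ≤ (tpt (k + 2) - tpt (0 + 1)) ^ (a - 1) * h ^ a := by
      intro s hs
      have f1 : (tpt (k + 2) - s) ^ (a - 1) ≤ (tpt (k + 2) - tpt (0 + 1)) ^ (a - 1) :=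
        Real.rpow_le_rpow_of_nonpos hgap (by linarith [hs.2]) (by linarith)
      have hs0 : 0 ≤ s := by
        have h1 := hs.1; rw [h00] at h1; exact h1
      have hsh : s ≤ h := by
        have h1 := hs.2; rw [h01] at h1; exact h1
      have f2a : 0 ≤ s ^ a - (tpt 0) ^ a := by
        rw [h00, Real.zero_rpow ha.ne', sub_zero]; exact Real.rpow_nonneg hs0 a
      have f2b : s ^ a - (tpt 0) ^ a ≤ h ^ a := by
        rw [h00, Real.zero_rpow ha.ne', sub_zero]
        exact Real.rpow_le_rpow hs0 hsh ha.le
      exact mul_le_mul f1 f2b f2a (Real.rpow_nonneg hgap.le _)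
    calc (∫ s in (tpt 0)..(tpt (0 + 1)), (tpt (k + 2) - s) ^ (a - 1) * (s ^ a - (tpt 0) ^ a))
        ≤ ∫ _s in (tpt 0)..(tpt (0 + 1)), (tpt (k + 2) - tpt (0 + 1)) ^ (a - 1) * h ^ a :=
          intervalIntegral.integral_mono_on hle (hint 0) intervalIntegrable_const key
      _ = tpt (k + 1) ^ (a - 1) * h ^ a * h := by
          rw [intervalIntegral.integral_const, smul_eq_mul, hstep 0, hgeq]; ring
  -- last interval
  have hIL : (∫ s in tpt (k + 1)..tpt (k + 1 + 1),
        (tpt (k + 2) - s) ^ (a - 1) * (s ^ a - (tpt (k + 1)) ^ a))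
      ≤ tpt (k + 1) ^ (a - 1) * h ^ a * h := by
    have hle : tpt (k + 1) ≤ tpt (k + 1 + 1) := htmono (by omega)
    have hkk : tpt (k + 1 + 1) = tpt (k + 2) := rfl
    set c := a * tpt (k + 1) ^ (a - 1) * h with hc
    have hcnn : 0 ≤ c :=
      mul_nonneg (mul_nonneg ha.le (Real.rpow_nonneg htk1.le _)) hpos.le
    have key : ∀ s ∈ Set.Icc (tpt (k + 1)) (tpt (k + 1 + 1)),
        (tpt (k + 2) - s) ^ (a - 1) * (s ^ a - (tpt (k + 1)) ^ a)
          ≤ c * (tpt (k + 2) - s) ^ (a - 1) := by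
      intro s hs
      have hs2 : s ≤ tpt (k + 2) := by rw [← hkk]; exact hs.2
      have hrnn : 0 ≤ (tpt (k + 2) - s) ^ (a - 1) := Real.rpow_nonneg (by linarith) _
      have hd : s - tpt (k + 1) ≤ h := by
        have h2 := hstep (k + 1); linarith [hs.2]
      have hbb := aux_bern ha.le ha1.le htk1 (d := s - tpt (k + 1)) (by linarith [hs.1])
      rw [show tpt (k + 1) + (s - tpt (k + 1)) = s by ring] at hbb
      have hnn : 0 ≤ a * (tpt (k + 1)) ^ (a - 1) :=
        mul_nonneg ha.le (Real.rpow_nonneg htk1.le _)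
      have f2b : s ^ a - (tpt (k + 1)) ^ a ≤ c := by
        rw [hc]; nlinarith [mul_le_mul_of_nonneg_left hd hnn, hs.1]
      calc (tpt (k + 2) - s) ^ (a - 1) * (s ^ a - (tpt (k + 1)) ^ a)
          ≤ (tpt (k + 2) - s) ^ (a - 1) * c := mul_le_mul_of_nonneg_left f2b hrnn
        _ = c * (tpt (k + 2) - s) ^ (a - 1) := mul_comm _ _
    have hIbound := intervalIntegral.integral_mono_on hle (hint (k + 1))
      ((hbase (k + 1) (k + 1 + 1)).const_mul c) key
    have hIval : (∫ s in tpt (k + 1)..tpt (k + 1 + 1), c * (tpt (k + 2) - s) ^ (a - 1))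
        = c * (h ^ a / a) := by
      rw [intervalIntegral.integral_const_mul]
      have h2 : (∫ s in tpt (k + 1)..tpt (k + 1 + 1), (tpt (k + 2) - s) ^ (a - 1))
          = ∫ x in (tpt (k + 2) - tpt (k + 1 + 1))..(tpt (k + 2) - tpt (k + 1)), x ^ (a - 1) :=
        intervalIntegral.integral_comp_sub_left (fun u : ℝ => u ^ (a - 1)) (tpt (k + 2))
      have e0 : tpt (k + 2) - tpt (k + 1 + 1) = 0 := by rw [hkk]; ring
      have e1 : tpt (k + 2) - tpt (k + 1) = h := by rw [← hkk]; exact hstep (k + 1)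
      rw [h2, e0, e1, integral_rpow (Or.inl (by linarith : (-1 : ℝ) < a - 1))]
      rw [show a - 1 + 1 = a by ring, Real.zero_rpow ha.ne', sub_zero]
    calc (∫ s in tpt (k + 1)..tpt (k + 1 + 1),
          (tpt (k + 2) - s) ^ (a - 1) * (s ^ a - (tpt (k + 1)) ^ a))
        ≤ c * (h ^ a / a) := by rw [← hIval]; exact hIbound
      _ = tpt (k + 1) ^ (a - 1) * h ^ a * h := by rw [hc]; field_simp
  -- endpoint bound
  have hend : tpt (k + 1) ^ (a - 1) * h ^ a * h ≤ 2 * tpt (k + 2) ^ (2 * a - 1) * h := by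
    have hy2x : tpt (k + 2) ≤ 2 * tpt (k + 1) := by
      have h1 : ((k + 2 : ℕ) : ℝ) ≤ 2 * ((k + 1 : ℕ) : ℝ) := by
        push_cast; linarith [Nat.cast_nonneg (α := ℝ) k]
      calc tpt (k + 2) = ((k + 2 : ℕ) : ℝ) * h := htpt _
        _ ≤ (2 * ((k + 1 : ℕ) : ℝ)) * h := mul_le_mul_of_nonneg_right h1 hpos.le
        _ = 2 * tpt (k + 1) := by rw [htpt]; ring
    have hA : tpt (k + 1) ^ (a - 1) ≤ 2 * tpt (k + 2) ^ (a - 1) :=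
      aux_comp htk1 (htmono (by omega)) hy2x (by linarith) (by linarith)
    have hhle : h ≤ tpt (k + 2) := by
      rw [htpt]
      exact le_mul_of_one_le_left hpos.le
        (by push_cast; linarith [Nat.cast_nonneg (α := ℝ) k])
    have hB : h ^ a ≤ tpt (k + 2) ^ a := Real.rpow_le_rpow hpos.le hhle ha.le
    have hAB : tpt (k + 1) ^ (a - 1) * h ^ a ≤ 2 * tpt (k + 2) ^ (a - 1) * tpt (k + 2) ^ a :=
      mul_le_mul hA hB (Real.rpow_nonneg hpos.le a)
        (mul_nonneg (by norm_num) (Real.rpow_nonneg ht2.le _))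
    have hC : tpt (k + 2) ^ (a - 1) * tpt (k + 2) ^ a = tpt (k + 2) ^ (2 * a - 1) := by
      rw [← Real.rpow_add ht2]; ring_nf
    calc tpt (k + 1) ^ (a - 1) * h ^ a * h
        ≤ 2 * tpt (k + 2) ^ (a - 1) * tpt (k + 2) ^ a * h :=
          mul_le_mul_of_nonneg_right hAB hpos.le
      _ = 2 * tpt (k + 2) ^ (2 * a - 1) * h := by rw [← hC]; ring
  -- middle sum
  have hP : h ^ (a - 1) * h ^ (a - 1) * h = h ^ (2 * a - 1) := by
    rw [show 2 * a - 1 = ((a - 1) + (a - 1)) + 1 by ring, Real.rpow_add_one hpos.ne',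
      Real.rpow_add hpos]
  have hmidsum : (∑ j ∈ Finset.range k, ∫ s in tpt (j + 1)..tpt (j + 1 + 1),
        (tpt (k + 2) - s) ^ (a - 1) * (s ^ a - (tpt (j + 1)) ^ a))
      ≤ 8 * tpt (k + 2) ^ (2 * a - 1) * h := by
    set c := a * (h ^ (a - 1) * h ^ (a - 1) * (h * h)) with hcc
    have h1nn : 0 ≤ h ^ (a - 1) := Real.rpow_nonneg hpos.le _
    have hcnn : 0 ≤ c :=
      mul_nonneg ha.le (mul_nonneg (mul_nonneg h1nn h1nn) (mul_nonneg hpos.le hpos.le))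
    have step1 : ∀ j ∈ Finset.range k,
        (∫ s in tpt (j + 1)..tpt (j + 1 + 1),
          (tpt (k + 2) - s) ^ (a - 1) * (s ^ a - (tpt (j + 1)) ^ a))
          ≤ c * (((j : ℝ) + 1) ^ (a - 1) * ((k : ℝ) - (j : ℝ)) ^ (a - 1)) := by
      intro j hj
      have hjk : j < k := Finset.mem_range.mp hj
      have h1 := hIj (j + 1) (by omega) (by omega)
      have e1 : tpt (k + 2) - tpt (j + 1 + 1) = ((k : ℝ) - (j : ℝ)) * h := by
        rw [htpt, htpt]; push_cast; ring
      have e2 : tpt (j + 1) = ((j : ℝ) + 1) * h := by rw [htpt]; push_cast; ring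
      have hkj : (0 : ℝ) ≤ (k : ℝ) - (j : ℝ) := by
        have : (j : ℝ) ≤ (k : ℝ) := by exact_mod_cast hjk.le
        linarith
      refine h1.trans (le_of_eq ?_)
      rw [e1, e2, Real.mul_rpow hkj hpos.le, Real.mul_rpow (by positivity) hpos.le, hcc]
      ring
    calc (∑ j ∈ Finset.range k, ∫ s in tpt (j + 1)..tpt (j + 1 + 1),
          (tpt (k + 2) - s) ^ (a - 1) * (s ^ a - (tpt (j + 1)) ^ a))
        ≤ ∑ j ∈ Finset.range k,
            c * (((j : ℝ) + 1) ^ (a - 1) * ((k : ℝ) - (j : ℝ)) ^ (a - 1)) :=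
          Finset.sum_le_sum step1
      _ = c * ∑ j ∈ Finset.range k,
            ((j : ℝ) + 1) ^ (a - 1) * ((k : ℝ) - (j : ℝ)) ^ (a - 1) := by
          rw [← Finset.mul_sum]
      _ ≤ c * ((4 / a) * ((k : ℝ) + 1) ^ (2 * a - 1)) :=
          mul_le_mul_of_nonneg_left (aux_sumD ha ha1.le k) hcnn
      _ = 4 * (((k : ℝ) + 1) ^ (2 * a - 1) * h ^ (2 * a - 1) * h) := by
          rw [hcc, show h ^ (a - 1) * h ^ (a - 1) * (h * h) = h ^ (2 * a - 1) * h by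
            rw [← hP]; ring]
          field_simp
      _ = 4 * ((((k : ℝ) + 1) * h) ^ (2 * a - 1) * h) := by
          rw [Real.mul_rpow (by positivity) hpos.le]
      _ ≤ 8 * tpt (k + 2) ^ (2 * a - 1) * h := by
          have hx : (0 : ℝ) < ((k : ℝ) + 1) * h := by positivity
          have hxy : ((k : ℝ) + 1) * h ≤ tpt (k + 2) := by
            rw [htpt]
            exact mul_le_mul_of_nonneg_right (by push_cast; linarith) hpos.le
          have hyx : tpt (k + 2) ≤ 2 * (((k : ℝ) + 1) * h) := by
            have h1 : ((k + 2 : ℕ) : ℝ) ≤ 2 * ((k : ℝ) + 1) := by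
              push_cast; linarith [Nat.cast_nonneg (α := ℝ) k]
            calc tpt (k + 2) = ((k + 2 : ℕ) : ℝ) * h := htpt _
              _ ≤ (2 * ((k : ℝ) + 1)) * h := mul_le_mul_of_nonneg_right h1 hpos.le
              _ = 2 * (((k : ℝ) + 1) * h) := by ring
          have hcmp := aux_comp (p := 2 * a - 1) hx hxy hyx (by linarith) (by linarith)
          have := mul_le_mul_of_nonneg_right hcmp hpos.le
          linarith
  -- assemble
  have hsplit : (∑ j ∈ Finset.range (k + 2), ∫ s in tpt j..tpt (j + 1),
        (tpt (k + 2) - s) ^ (a - 1) * (s ^ a - (tpt j) ^ a))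
      = (∑ j ∈ Finset.range k, ∫ s in tpt (j + 1)..tpt (j + 1 + 1),
          (tpt (k + 2) - s) ^ (a - 1) * (s ^ a - (tpt (j + 1)) ^ a))
        + (∫ s in (tpt 0)..(tpt (0 + 1)), (tpt (k + 2) - s) ^ (a - 1) * (s ^ a - (tpt 0) ^ a))
        + (∫ s in tpt (k + 1)..tpt (k + 1 + 1),
            (tpt (k + 2) - s) ^ (a - 1) * (s ^ a - (tpt (k + 1)) ^ a)) :=
    aux_split (fun j => ∫ s in tpt j..tpt (j + 1),
      (tpt (k + 2) - s) ^ (a - 1) * (s ^ a - (tpt j) ^ a)) k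
  rw [hsplit]
  linarith [hmidsum, hI0.trans hend, hIL.trans hend]
end

section
/- Let a ∈ (0,1) and ν ∈ (−a, 1). For every ε > 0 sufficiently small there is C > 0 such that for all u ∈ (0,T] and τ > 0: ∫_u^{u+τ} ω^{a−2} dω ≤ C u^{ε−1−ν} τ^{min{a+ν−ε, 1}}. -/
open MeasureTheory intervalIntegral

theorem stmt_7 (a ν T : ℝ) (ha : 0 < a) (ha1 : a < 1)
    (hν : -a < ν) (hν1 : ν < 1) (hT : 0 < T) :
    ∃ ε₀ > (0 : ℝ), ∀ ε, 0 < ε → ε ≤ ε₀ → ∃ C > (0 : ℝ),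
      ∀ u τ : ℝ, 0 < u → u ≤ T → 0 < τ →
        (∫ ω in u..(u + τ), ω ^ (a - 2)) ≤ C * u ^ (ε - 1 - ν) * τ ^ (min (a + ν - ε) 1) := by
  have haν : 0 < a + ν := by linarith
  refine ⟨min ((a + ν)/2) 1, by positivity, ?_⟩
  intro ε hε hε0
  have hεa : ε ≤ (a+ν)/2 := le_trans hε0 (min_le_left _ _)
  set m := min (a + ν - ε) 1 with hm_def
  have hm_pos : 0 < m := lt_min (by linarith) one_pos
  have hm1 : m ≤ 1 := min_le_right _ _
  set δ := a + ν - ε - m with hδ_def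
  have hδ : 0 ≤ δ := by
    have := min_le_left (a + ν - ε) 1
    simp only [hδ_def]; linarith
  have h1a : 0 < 1 - a := by linarith
  refine ⟨T ^ δ * (1 + 1/(1-a)), by positivity, ?_⟩
  intro u τ hu huT hτ
  have hu' : (0:ℝ) < u + τ := by linarith
  have hzero : (0:ℝ) ∉ Set.uIcc u (u+τ) := by
    rw [Set.uIcc_of_le (by linarith)]
    intro h; exact absurd h.1 (not_le.mpr hu)
  have huδ : u ^ δ ≤ T ^ δ := Real.rpow_le_rpow hu.le huT hδ
  have hC : (1:ℝ)/(1-a) ≤ 1 + 1/(1-a) := by linarith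
  rcases le_total τ u with hcase | hcase
  · -- τ ≤ u: integral ≤ τ * u^(a-2)
    have hint : IntervalIntegrable (fun ω : ℝ => ω ^ (a-2)) volume u (u+τ) :=
      intervalIntegrable_rpow (Or.inr hzero)
    have hbound : (∫ ω in u..(u + τ), ω ^ (a - 2)) ≤ τ * u ^ (a-2) := by
      have h1 : (∫ ω in u..(u + τ), ω ^ (a - 2)) ≤ ∫ _ω in u..(u + τ), u ^ (a-2) := by
        apply intervalIntegral.integral_mono_on (by linarith) hint intervalIntegrable_const
        intro x hx
        exact Real.rpow_le_rpow_of_nonpos hu hx.1 (by linarith)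
      rw [intervalIntegral.integral_const, smul_eq_mul, add_sub_cancel_left] at h1
      exact h1
    refine hbound.trans ?_
    have hτm : τ ^ m * τ ^ (1 - m) = τ := by
      rw [← Real.rpow_add hτ, show m + (1-m) = (1:ℝ) by ring, Real.rpow_one]
    have h2 : τ ^ (1-m) ≤ u ^ (1-m) := Real.rpow_le_rpow hτ.le hcase (by linarith)
    have h3 : τ * u ^ (a-2) ≤ τ ^ m * (u ^ (1-m) * u ^ (a-2)) := by
      calc τ * u ^ (a-2) = τ ^ m * τ ^ (1-m) * u ^ (a-2) := by rw [hτm]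
        _ ≤ τ ^ m * u ^ (1-m) * u ^ (a-2) := by gcongr
        _ = τ ^ m * (u ^ (1-m) * u ^ (a-2)) := by ring
    refine h3.trans ?_
    have h4 : u ^ (1-m) * u ^ (a-2) = u ^ (ε-1-ν) * u ^ δ := by
      rw [← Real.rpow_add hu, ← Real.rpow_add hu]
      congr 1; simp only [hδ_def]; ring
    rw [h4]
    have h5 : τ ^ m * (u ^ (ε-1-ν) * u ^ δ) ≤ τ ^ m * (u ^ (ε-1-ν) * T ^ δ) := by
      gcongr
    refine h5.trans ?_
    calc τ ^ m * (u ^ (ε-1-ν) * T ^ δ) = T ^ δ * 1 * u ^ (ε-1-ν) * τ ^ m := by ring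
      _ ≤ T ^ δ * (1 + 1/(1-a)) * u ^ (ε-1-ν) * τ ^ m := by
          gcongr
          linarith [one_div_pos.mpr h1a]
  · -- u ≤ τ
    have hne : a - 2 ≠ -1 := by intro h; linarith
    have hclosed : (∫ ω in u..(u + τ), ω ^ (a - 2))
        = ((u+τ) ^ (a-1) - u ^ (a-1)) / (a-1) := by
      rw [integral_rpow (Or.inr ⟨hne, hzero⟩), show a-2+1 = a-1 by ring]
    rw [hclosed]
    have hbound : ((u+τ) ^ (a-1) - u ^ (a-1)) / (a-1) ≤ u ^ (a-1) / (1-a) := by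
      have hne1 : a - 1 ≠ 0 := by linarith
      have hne2 : (1:ℝ) - a ≠ 0 := by linarith
      have hkey : ((u+τ) ^ (a-1) - u ^ (a-1)) / (a-1)
          = (u ^ (a-1) - (u+τ) ^ (a-1)) / (1-a) := by
        field_simp; ring
      rw [hkey]
      gcongr ?_ / _
      linarith [Real.rpow_nonneg hu'.le (a-1)]
    refine hbound.trans ?_
    have h4 : u ^ (a-1) = u ^ (ε-1-ν) * (u ^ δ * u ^ m) := by
      rw [← Real.rpow_add hu, ← Real.rpow_add hu]
      congr 1; simp only [hδ_def]; ring
    rw [h4]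
    have hum : u ^ m ≤ τ ^ m := Real.rpow_le_rpow hu.le hcase hm_pos.le
    calc u ^ (ε-1-ν) * (u ^ δ * u ^ m) / (1-a)
        ≤ u ^ (ε-1-ν) * (T ^ δ * τ ^ m) / (1-a) := by gcongr
      _ = (T ^ δ * (1/(1-a))) * u ^ (ε-1-ν) * τ ^ m := by ring
      _ ≤ (T ^ δ * (1 + 1/(1-a))) * u ^ (ε-1-ν) * τ ^ m := by
          gcongr <;> first | positivity | linarith
end

section
/- Let θ ∈ (0,1) and 0 < s < t. Then for any ρ ∈ (−1/2, 1/2): ∫_0^s ((t−u)^{ρ} − (s−u)^{ρ})^2 du ≤ C (t−s)^{1+2ρ} for a constant C depending only on ρ. -/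
/-!
Substituting `u = s - (t - s) v` turns the integral into
`(t - s) ^ (1 + 2ρ) * ∫ v in 0..s/(t - s), ((v + 1) ^ ρ - v ^ ρ) ^ 2`, so
`C = 1 + ∫ v in Ioi 0, ((v + 1) ^ ρ - v ^ ρ) ^ 2` works once this improper integral converges.
Near `0` the integrand is at most `2 (v + 1) ^ (2ρ) + 2 v ^ (2ρ)`, integrable since `2ρ > -1`;
near `∞` the mean value theorem bounds it by `ρ ^ 2 v ^ (2ρ - 2)`, integrable since `2ρ - 2 < -1`.
-/

open MeasureTheory intervalIntegral Set

namespace Real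

lemma rpow_sq_eq_rpow_two_mul {x : ℝ} (hx : 0 ≤ x) (y : ℝ) : (x ^ y) ^ 2 = x ^ (2 * y) := by
  rw [mul_comm, rpow_mul hx, rpow_two]

lemma sq_rpow_add_sub_rpow_eq (ρ : ℝ) {a h : ℝ} (ha : 0 ≤ a) (hh : 0 < h) :
    ((a + h) ^ ρ - a ^ ρ) ^ 2 = h ^ (2 * ρ) * ((a / h + 1) ^ ρ - (a / h) ^ ρ) ^ 2 := by
  have hscale : ∀ x, 0 ≤ x → (h * x) ^ ρ = h ^ ρ * x ^ ρ := fun x hx => mul_rpow hh.le hx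
  rw [show a + h = h * (a / h + 1) by field_simp, show a = h * (a / h) by field_simp,
    mul_div_cancel_left₀ _ hh.ne', hscale _ (by positivity), hscale _ (by positivity), ← mul_sub,
    mul_pow, rpow_sq_eq_rpow_two_mul hh.le]

lemma abs_rpow_add_one_sub_rpow_le {ρ v : ℝ} (hρ : ρ ≤ 1) (hv : 0 < v) :
    |(v + 1) ^ ρ - v ^ ρ| ≤ |ρ| * v ^ (ρ - 1) := by
  obtain ⟨c, ⟨hvc, -⟩, hc⟩ := exists_hasDerivAt_eq_slope (fun x => x ^ ρ)
    (fun x => ρ * x ^ (ρ - 1)) (lt_add_one v)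
    (continuousOn_id.rpow_const fun x hx => Or.inl (by simp only [id]; linarith [hx.1]))
    (fun x hx => hasDerivAt_rpow_const (Or.inl (by linarith [hx.1])))
  rw [add_sub_cancel_left, div_one] at hc
  rw [← hc, abs_mul, abs_of_pos (rpow_pos_of_pos (hv.trans hvc) _)]
  exact mul_le_mul_of_nonneg_left (rpow_le_rpow_of_nonpos hv hvc.le (by linarith)) (abs_nonneg ρ)

end Real

open Real

lemma integrableOn_Ioc_sq_rpow_add_one_sub_rpow {ρ : ℝ} (hρ : -(1 / 2) < ρ) :
    IntegrableOn (fun v : ℝ => ((v + 1) ^ ρ - v ^ ρ) ^ 2) (Ioc 0 1) := by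
  have hdom : IntegrableOn (fun v : ℝ => 2 * (v + 1) ^ (2 * ρ) + 2 * v ^ (2 * ρ)) (Ioc 0 1) := by
    refine (Integrable.const_mul ?_ 2).add (Integrable.const_mul ?_ 2)
    · refine (ContinuousOn.integrableOn_Icc ?_).mono_set Ioc_subset_Icc_self
      exact ContinuousOn.rpow_const (by fun_prop) fun v hv =>
        Or.inl (by linarith [hv.1] : (0 : ℝ) < v + 1).ne'
    · exact (intervalIntegrable_iff_integrableOn_Ioc_of_le zero_le_one).1
        (intervalIntegrable_rpow' (by linarith))
  refine hdom.mono' (by fun_prop) (ae_restrict_of_forall_mem measurableSet_Ioc fun v hv => ?_)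
  rw [Real.norm_of_nonneg (sq_nonneg _), ← rpow_sq_eq_rpow_two_mul hv.1.le,
    ← rpow_sq_eq_rpow_two_mul (by linarith [hv.1])]
  nlinarith [sq_nonneg ((v + 1) ^ ρ + v ^ ρ)]

lemma integrableOn_Ioi_sq_rpow_add_one_sub_rpow {ρ : ℝ} (hρ : ρ < 1 / 2) :
    IntegrableOn (fun v : ℝ => ((v + 1) ^ ρ - v ^ ρ) ^ 2) (Ioi 1) := by
  have hdom : IntegrableOn (fun v : ℝ => ρ ^ 2 * v ^ (2 * ρ - 2)) (Ioi 1) :=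
    (integrableOn_Ioi_rpow_of_lt (by linarith) one_pos).const_mul _
  refine hdom.mono' (by fun_prop) (ae_restrict_of_forall_mem measurableSet_Ioi fun v hv => ?_)
  have hv0 : 0 < v := zero_lt_one.trans hv
  rw [Real.norm_of_nonneg (sq_nonneg _), ← sq_abs, show 2 * ρ - 2 = 2 * (ρ - 1) by ring,
    ← rpow_sq_eq_rpow_two_mul hv0.le, ← sq_abs ρ, ← mul_pow]
  exact pow_le_pow_left₀ (abs_nonneg _) (abs_rpow_add_one_sub_rpow_le (by linarith) hv0) 2

lemma integrableOn_Ioi_zero_sq_rpow_add_one_sub_rpow {ρ : ℝ} (hρ : -(1 / 2) < ρ)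
    (hρ' : ρ < 1 / 2) :
    IntegrableOn (fun v : ℝ => ((v + 1) ^ ρ - v ^ ρ) ^ 2) (Ioi 0) := by
  rw [← Ioc_union_Ioi_eq_Ioi zero_le_one]
  exact (integrableOn_Ioc_sq_rpow_add_one_sub_rpow hρ).union
    (integrableOn_Ioi_sq_rpow_add_one_sub_rpow hρ')

lemma intervalIntegral_sq_rpow_sub_rpow_eq (ρ : ℝ) {s t : ℝ} (hs : 0 ≤ s) (hst : s < t) :
    ∫ u in (0 : ℝ)..s, ((t - u) ^ ρ - (s - u) ^ ρ) ^ 2 =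
      (t - s) ^ (1 + 2 * ρ) * ∫ v in (0 : ℝ)..s / (t - s), ((v + 1) ^ ρ - v ^ ρ) ^ 2 := by
  set h := t - s
  have hh : 0 < h := sub_pos.2 hst
  calc ∫ u in (0 : ℝ)..s, ((t - u) ^ ρ - (s - u) ^ ρ) ^ 2
      = ∫ u in (0 : ℝ)..s, h ^ (2 * ρ) * ((s / h - u / h + 1) ^ ρ - (s / h - u / h) ^ ρ) ^ 2 := by
        refine integral_congr fun u hu => ?_
        rw [uIcc_of_le hs] at hu
        rw [← sub_div, ← sq_rpow_add_sub_rpow_eq ρ (sub_nonneg.2 hu.2) hh, sub_add_sub_cancel']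
    _ = h ^ (2 * ρ) * (h * ∫ v in (0 : ℝ)..s / h, ((v + 1) ^ ρ - v ^ ρ) ^ 2) := by
        rw [intervalIntegral.integral_const_mul,
          integral_comp_sub_div (fun v => ((v + 1) ^ ρ - v ^ ρ) ^ 2) hh.ne', smul_eq_mul,
          sub_self, zero_div, sub_zero]
    _ = h ^ (1 + 2 * ρ) * ∫ v in (0 : ℝ)..s / h, ((v + 1) ^ ρ - v ^ ρ) ^ 2 := by
        rw [rpow_add hh, rpow_one]; ring

theorem stmt_9_general (ρ : ℝ) (hρ : -(1 / 2) < ρ) (hρ1 : ρ < 1 / 2) :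
    ∃ C > (0 : ℝ), ∀ s t : ℝ, 0 < s → s < t →
      (∫ u in (0 : ℝ)..s, ((t - u) ^ ρ - (s - u) ^ ρ) ^ 2) ≤ C * (t - s) ^ (1 + 2 * ρ) := by
  set K := ∫ v in Ioi (0 : ℝ), ((v + 1) ^ ρ - v ^ ρ) ^ 2
  have hnonneg : ∀ v : ℝ, 0 ≤ ((v + 1) ^ ρ - v ^ ρ) ^ 2 := fun v => sq_nonneg _
  have hK : 0 ≤ K := setIntegral_nonneg measurableSet_Ioi fun v _ => hnonneg v
  refine ⟨1 + K, by positivity, fun s t hs hst => ?_⟩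
  have hscaled : ∫ v in (0 : ℝ)..s / (t - s), ((v + 1) ^ ρ - v ^ ρ) ^ 2 ≤ K := by
    rw [integral_of_le (div_nonneg hs.le (sub_pos.2 hst).le)]
    exact setIntegral_mono_set (integrableOn_Ioi_zero_sq_rpow_add_one_sub_rpow hρ hρ1)
      (ae_restrict_of_forall_mem measurableSet_Ioi fun v _ => hnonneg v)
      Ioc_subset_Ioi_self.eventuallyLE
  rw [intervalIntegral_sq_rpow_sub_rpow_eq ρ hs.le hst, mul_comm]
  gcongr
  linarith

theorem stmt_9 (θ : ℝ) (hθ : 0 < θ) (hθ1 : θ < 1)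
    (ρ : ℝ) (hρ : -(1 / 2) < ρ) (hρ1 : ρ < 1 / 2) :
    ∃ C > (0 : ℝ), ∀ s t : ℝ, 0 < s → s < t →
      (∫ u in (0 : ℝ)..s, ((t - u) ^ ρ - (s - u) ^ ρ) ^ 2) ≤ C * (t - s) ^ (1 + 2 * ρ) :=
  stmt_9_general ρ hρ hρ1
end

section
/- Let a ∈ (0,1), λ > 0. Suppose |E_{a,a}(−x)| ≤ C_0 (1+x)^{−2} for all x ≥ 0. Then for all 0 < s < t and every ρ ∈ [−1, 1]: λ^{ρ/2} |E_{a,1}(−λ t^a) − E_{a,1}(−λ s^a)| ≤ C ∫_s^t u^{−1 − aρ/2} du, where C depends only on a and C_0, using that (λ u^a)^{1+ρ/2} / (1+λ u^a)^2 ≤ 1 for ρ ∈ [−2,2]. -/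
open MeasureTheory intervalIntegral

/-!
Since `d/du E_{a,1}(-λ u^a) = -λ u^(a-1) E_{a,a}(-λ u^a)`, the fundamental theorem of calculus
reduces the claim (with `C = C₀`) to a pointwise bound on the derivative. With `x = λ u^a`,
`λ^(ρ/2) · λ u^(a-1) = x^(1+ρ/2) · u^(-1-aρ/2)`, and
`x^(1+ρ/2) |E_{a,a}(-x)| ≤ C₀ x^(1+ρ/2) / (1+x)^2 ≤ C₀` because `0 ≤ 1 + ρ/2 ≤ 2`.

Term-by-term differentiation of the series is justified by `M^x / Γ(x+b) ≤ C` for `x ≥ 0`, which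
follows from `Γ(x+b) ≥ (⌊x⌋₊ - 1)!` for large `x` and `M^n / n! ≤ e^M`.
-/

open Real Set

lemma exists_rpow_div_Gamma_add_le {M b : ℝ} (hM : 1 ≤ M) (hb : 0 < b) :
    ∃ C, ∀ x, 0 ≤ x → M ^ x / Gamma (x + b) ≤ C := by
  obtain ⟨x₀, hx₀, hmin⟩ := exists_isMinOn_Gamma_Ioi
  have hΓ₀ : 0 < Gamma x₀ := Gamma_pos_of_pos (by linarith [hx₀.1])
  refine ⟨M ^ 2 * max (exp M) (Gamma x₀)⁻¹, fun x hx => ?_⟩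
  have hΓ : 0 < Gamma (x + b) := Gamma_pos_of_pos (by linarith)
  rcases lt_or_ge x 2 with hx2 | hx2
  · calc M ^ x / Gamma (x + b) ≤ M ^ (2 : ℝ) / Gamma x₀ :=
          div_le_div₀ (by positivity) (rpow_le_rpow_of_exponent_le hM hx2.le) hΓ₀
            (hmin (show x + b ∈ Ioi 0 by simp only [mem_Ioi]; linarith))
      _ ≤ M ^ 2 * max (exp M) (Gamma x₀)⁻¹ := by
          rw [rpow_two, div_eq_mul_inv]
          gcongr
          exact le_max_right _ _
  · -- with `n = ⌊x⌋₊ = k + 2`: `Γ(x + b) ≥ Γ(k + 2) = (k + 1)!` and `M ^ x ≤ M ^ (k + 3)`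
    obtain ⟨k, hk⟩ := Nat.exists_eq_add_of_le' (Nat.le_floor (by exact_mod_cast hx2) : 2 ≤ ⌊x⌋₊)
    have hlow : ((k + 1 : ℕ) : ℝ) + 1 ≤ x := by
      have := Nat.floor_le hx; rw [hk] at this; push_cast at this ⊢; linarith
    have hup : x ≤ ((k + 3 : ℕ) : ℝ) := by
      have := Nat.lt_floor_add_one x; rw [hk] at this; push_cast at this ⊢; linarith
    have hfact : ((k + 1).factorial : ℝ) ≤ Gamma (x + b) := by
      rw [← Gamma_nat_eq_factorial]
      refine Gamma_strictMonoOn_Ici.monotoneOn ?_ ?_ (by linarith) <;>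
        simp only [mem_Ici] <;> push_cast at hlow ⊢ <;> linarith
    calc M ^ x / Gamma (x + b) ≤ M ^ (k + 3) / ((k + 1).factorial : ℝ) := by
          gcongr
          rw [← rpow_natCast]
          exact rpow_le_rpow_of_exponent_le hM hup
      _ = M ^ 2 * (M ^ (k + 1) / ((k + 1).factorial : ℝ)) := by ring
      _ ≤ M ^ 2 * max (exp M) (Gamma x₀)⁻¹ := by
          gcongr
          exact (pow_div_factorial_le_exp M (by linarith) _).trans (le_max_left _ _)

lemma summable_pow_div_Gamma {a b : ℝ} (ha : 0 < a) (hb : 0 < b) (x : ℝ) :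
    Summable fun k : ℕ => x ^ k / Gamma (a * k + b) := by
  set M := max 1 ((2 * |x|) ^ a⁻¹)
  have hM : 1 ≤ M := le_max_left _ _
  have hxM : 2 * |x| ≤ M ^ a := by
    calc 2 * |x| = ((2 * |x|) ^ a⁻¹) ^ a := (rpow_inv_rpow (by positivity) ha.ne').symm
      _ ≤ M ^ a := rpow_le_rpow (by positivity) (le_max_right _ _) ha.le
  obtain ⟨C, hC⟩ := exists_rpow_div_Gamma_add_le hM hb
  refine Summable.of_norm_bounded (summable_geometric_two.mul_left C) fun k => ?_
  have hΓ : 0 < Gamma (a * k + b) := Gamma_pos_of_pos (by positivity)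
  calc ‖x ^ k / Gamma (a * k + b)‖ = |x| ^ k / Gamma (a * k + b) := by
        rw [norm_eq_abs, abs_div, abs_pow, abs_of_pos hΓ]
    _ ≤ (M ^ a / 2) ^ k / Gamma (a * k + b) := by gcongr; linarith
    _ = M ^ (a * k) / Gamma (a * k + b) * (1 / 2) ^ k := by
        rw [div_pow, ← rpow_natCast, ← rpow_mul (by positivity), one_div, inv_pow]; ring
    _ ≤ C * (1 / 2) ^ k := by gcongr; exact hC _ (by positivity)

lemma continuous_mittagLeffler {a b : ℝ} (ha : 0 < a) (hb : 0 < b) :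
    Continuous (mittagLeffler a b) := by
  refine continuous_iff_continuousAt.2 fun x => ?_
  have hball : ContinuousOn (mittagLeffler a b) (Metric.closedBall 0 (|x| + 1)) := by
    refine continuousOn_tsum (fun k => ((continuous_pow k).div_const _).continuousOn)
      (summable_pow_div_Gamma ha hb (|x| + 1)) fun k y hy => ?_
    have hΓ : 0 < Gamma (a * k + b) := Gamma_pos_of_pos (by positivity)
    rw [mem_closedBall_zero_iff, norm_eq_abs] at hy
    rw [norm_div, norm_pow, norm_eq_abs, norm_eq_abs, abs_of_pos hΓ]
    gcongr
  exact hball.continuousAt (Metric.closedBall_mem_nhds_of_mem (by simp))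

lemma hasDerivAt_mittagLeffler_one {a : ℝ} (ha : 0 < a) (x : ℝ) :
    HasDerivAt (mittagLeffler a 1) (mittagLeffler a a x / a) x := by
  have hshift : ∀ y, mittagLeffler a 1 y =
      (∑' k : ℕ, y ^ (k + 1) / Gamma (a * (k + 1 : ℕ) + 1)) + 1 := by
    intro y
    rw [mittagLeffler, (summable_pow_div_Gamma ha one_pos y).tsum_eq_zero_add]
    simp [add_comm]
  -- `(k + 1) / Γ(a (k + 1) + 1) = 1 / (a Γ(a k + a))` by the functional equation of `Γ`
  have hterm : ∀ (k : ℕ) (y : ℝ), HasDerivAt (fun y => y ^ (k + 1) / Gamma (a * (k + 1 : ℕ) + 1))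
      (y ^ k / Gamma (a * k + a) / a) y := by
    intro k y
    have hk : 0 < a * k + a := by positivity
    have hΓ : Gamma (a * (k + 1 : ℕ) + 1) = (a * k + a) * Gamma (a * k + a) := by
      rw [← Gamma_add_one hk.ne']; push_cast; ring_nf
    refine ((hasDerivAt_pow (k + 1) y).div_const _).congr_deriv ?_
    rw [hΓ]
    field_simp [(Gamma_pos_of_pos hk).ne']
    push_cast
    ring
  have hbound : ∀ (k : ℕ) y, y ∈ Metric.ball (0 : ℝ) (|x| + 1) →
      ‖y ^ k / Gamma (a * k + a) / a‖ ≤ (|x| + 1) ^ k / Gamma (a * k + a) / a := by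
    intro k y hy
    have hΓ : 0 < Gamma (a * k + a) := Gamma_pos_of_pos (by positivity)
    rw [mem_ball_zero_iff, norm_eq_abs] at hy
    rw [norm_div, norm_div, norm_pow, norm_eq_abs, norm_eq_abs, norm_eq_abs, abs_of_pos hΓ,
      abs_of_pos ha]
    gcongr
  have hseries := hasDerivAt_tsum_of_isPreconnected
    ((summable_pow_div_Gamma ha ha (|x| + 1)).div_const a) Metric.isOpen_ball
    (convex_ball (0 : ℝ) (|x| + 1)).isPreconnected (fun k y _ => hterm k y) hbound
    (Metric.mem_ball_self (by positivity)) (by simp [summable_zero]) (y := x) (by simp)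
  rw [funext hshift, mittagLeffler, ← tsum_div_const]
  exact hseries.add_const 1

lemma hasDerivAt_mittagLeffler_one_neg_mul_rpow {a lam u : ℝ} (ha : 0 < a) (hu : u ≠ 0) :
    HasDerivAt (fun u => mittagLeffler a 1 (-lam * u ^ a))
      (-lam * u ^ (a - 1) * mittagLeffler a a (-lam * u ^ a)) u := by
  refine ((hasDerivAt_mittagLeffler_one ha _).comp u
    ((hasDerivAt_rpow_const (p := a) (Or.inl hu)).const_mul (-lam))).congr_deriv ?_
  field_simp

lemma rpow_mul_one_add_rpow_neg_two_le_one {x θ : ℝ} (hx : 0 ≤ x) (hθ₀ : 0 ≤ θ) (hθ₂ : θ ≤ 2) :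
    x ^ θ * (1 + x) ^ (-(2 : ℝ)) ≤ 1 := by
  have hle : x ^ θ ≤ (1 + x) ^ (2 : ℝ) :=
    (rpow_le_rpow hx (by linarith) hθ₀).trans (rpow_le_rpow_of_exponent_le (by linarith) hθ₂)
  rwa [rpow_neg (by linarith), ← div_eq_mul_inv, div_le_one (by positivity)]

lemma rpow_mul_abs_deriv_comp_neg_mul_rpow_le {f : ℝ → ℝ} {a lam C₀ ρ u : ℝ} (hlam : 0 < lam)
    (hC₀ : 0 ≤ C₀) (hf : ∀ x : ℝ, 0 ≤ x → |f (-x)| ≤ C₀ * (1 + x) ^ (-(2 : ℝ)))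
    (hρ₁ : -2 ≤ ρ) (hρ₂ : ρ ≤ 2) (hu : 0 < u) :
    lam ^ (ρ / 2) * |-lam * u ^ (a - 1) * f (-lam * u ^ a)| ≤ C₀ * u ^ (-1 - a * ρ / 2) := by
  set x := lam * u ^ a
  have hx : 0 < x := by positivity
  have hweight : lam ^ (ρ / 2) * (lam * u ^ (a - 1)) = x ^ (1 + ρ / 2) * u ^ (-1 - a * ρ / 2) := by
    rw [mul_rpow hlam.le (by positivity), ← rpow_mul hu.le, mul_assoc, ← rpow_add hu, rpow_add hlam,
      rpow_one]
    ring_nf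
  calc lam ^ (ρ / 2) * |-lam * u ^ (a - 1) * f (-lam * u ^ a)|
      = lam ^ (ρ / 2) * (lam * u ^ (a - 1)) * |f (-x)| := by
        rw [neg_mul, abs_mul, abs_neg, abs_of_pos (by positivity), neg_mul]; ring
    _ ≤ x ^ (1 + ρ / 2) * u ^ (-1 - a * ρ / 2) * (C₀ * (1 + x) ^ (-(2 : ℝ))) := by
        rw [hweight]; gcongr; exact hf x hx.le
    _ = C₀ * (x ^ (1 + ρ / 2) * (1 + x) ^ (-(2 : ℝ))) * u ^ (-1 - a * ρ / 2) := by ring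
    _ ≤ C₀ * 1 * u ^ (-1 - a * ρ / 2) := by
        gcongr; exact rpow_mul_one_add_rpow_neg_two_le_one hx.le (by linarith) (by linarith)
    _ = C₀ * u ^ (-1 - a * ρ / 2) := by ring

lemma abs_sub_le_integral_of_hasDerivAt {f f' g : ℝ → ℝ} {s t : ℝ} (hst : s ≤ t)
    (hf : ∀ u ∈ Icc s t, HasDerivAt f (f' u) u) (hf' : IntervalIntegrable f' volume s t)
    (hg : IntervalIntegrable g volume s t) (hbound : ∀ u ∈ Icc s t, |f' u| ≤ g u) :
    |f t - f s| ≤ ∫ u in s..t, g u := by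
  rw [← integral_eq_sub_of_hasDerivAt (by rwa [uIcc_of_le hst]) hf']
  exact intervalIntegral.norm_integral_le_of_norm_le (f := f') hst
    (Filter.Eventually.of_forall fun u hu => hbound u (Ioc_subset_Icc_self hu)) hg

theorem stmt_11_general (a lam C₀ : ℝ) (ha : 0 < a) (hlam : 0 < lam)
    (hC₀ : 0 < C₀)
    (hML : ∀ x : ℝ, 0 ≤ x → |mittagLeffler a a (-x)| ≤ C₀ * (1 + x) ^ (-(2 : ℝ))) :
    ∃ C > (0 : ℝ), ∀ s t ρ : ℝ, 0 < s → s < t → -1 ≤ ρ → ρ ≤ 1 →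
      lam ^ (ρ / 2) * |mittagLeffler a 1 (-lam * t ^ a) - mittagLeffler a 1 (-lam * s ^ a)|
        ≤ C * ∫ u in s..t, u ^ (-1 - a * ρ / 2) := by
  refine ⟨C₀, hC₀, fun s t ρ hs hst hρ₁ hρ₂ => ?_⟩
  have hpos : ∀ u ∈ uIcc s t, 0 < u := fun u hu => hs.trans_le (uIcc_of_le hst.le ▸ hu).1
  have hrpow : ∀ p : ℝ, ContinuousOn (fun u : ℝ => u ^ p) (uIcc s t) := fun p =>
    ContinuousOn.rpow_const (f := fun u => u) continuousOn_id fun u hu => Or.inl (hpos u hu).ne'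
  have hderiv : ∀ u ∈ Icc s t,
      HasDerivAt (fun u => lam ^ (ρ / 2) * mittagLeffler a 1 (-lam * u ^ a))
      (lam ^ (ρ / 2) * (-lam * u ^ (a - 1) * mittagLeffler a a (-lam * u ^ a))) u :=
    fun u hu => ((hasDerivAt_mittagLeffler_one_neg_mul_rpow ha
      (hpos u (Icc_subset_uIcc hu)).ne').const_mul _)
  have hderiv_integrable : IntervalIntegrable
      (fun u => lam ^ (ρ / 2) * (-lam * u ^ (a - 1) * mittagLeffler a a (-lam * u ^ a)))
      volume s t :=
    (continuousOn_const.mul ((continuousOn_const.mul (hrpow _)).mul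
      ((continuous_mittagLeffler ha ha).comp_continuousOn
        (continuousOn_const.mul (hrpow a))))).intervalIntegrable
  have hderiv_le : ∀ u ∈ Icc s t,
      |lam ^ (ρ / 2) * (-lam * u ^ (a - 1) * mittagLeffler a a (-lam * u ^ a))|
        ≤ C₀ * u ^ (-1 - a * ρ / 2) := fun u hu => by
    rw [abs_mul, abs_of_pos (rpow_pos_of_pos hlam _)]
    exact rpow_mul_abs_deriv_comp_neg_mul_rpow_le hlam hC₀.le hML (by linarith) (by linarith)
      (hs.trans_le hu.1)
  calc lam ^ (ρ / 2) * |mittagLeffler a 1 (-lam * t ^ a) - mittagLeffler a 1 (-lam * s ^ a)|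
      = |lam ^ (ρ / 2) * mittagLeffler a 1 (-lam * t ^ a)
          - lam ^ (ρ / 2) * mittagLeffler a 1 (-lam * s ^ a)| := by
        rw [← mul_sub, abs_mul, abs_of_pos (rpow_pos_of_pos hlam _)]
    _ ≤ ∫ u in s..t, C₀ * u ^ (-1 - a * ρ / 2) :=
        abs_sub_le_integral_of_hasDerivAt hst.le hderiv hderiv_integrable
          (continuousOn_const.mul (hrpow _)).intervalIntegrable hderiv_le
    _ = C₀ * ∫ u in s..t, u ^ (-1 - a * ρ / 2) := intervalIntegral.integral_const_mul _ _

theorem stmt_11 (a lam C₀ : ℝ) (ha : 0 < a) (ha1 : a < 1) (hlam : 0 < lam)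
    (hC₀ : 0 < C₀)
    (hML : ∀ x : ℝ, 0 ≤ x → |mittagLeffler a a (-x)| ≤ C₀ * (1 + x) ^ (-(2 : ℝ))) :
    ∃ C > (0 : ℝ), ∀ s t ρ : ℝ, 0 < s → s < t → -1 ≤ ρ → ρ ≤ 1 →
      lam ^ (ρ / 2) * |mittagLeffler a 1 (-lam * t ^ a) - mittagLeffler a 1 (-lam * s ^ a)|
        ≤ C * ∫ u in s..t, u ^ (-1 - a * ρ / 2) :=
  stmt_11_general a lam C₀ ha hlam hC₀ hML
end

section
/- Let a ∈ (1/2, 1) and h > 0. For 0 ≤ t_i < t_i + h ≤ t_j, s ∈ (t_i, t_i+h], τ ∈ (t_j, t_j+h] with t_j − t_i ≥ 2h (i.e., j > i+1), and ε ∈ (0, 2a−1): ∫_{t_i}^{s} (s−u)^{a−1} ((t_j−u)^{a−1} − (τ−u)^{a−1}) du ≤ C h^{2a−ε} (τ−s)^{ε−1}, where C depends only on a, ε and an upper bound T on all times, using the mean value theorem bound (t_j−u)^{a−1} − (τ−u)^{a−1} ≤ (τ−t_j)(1−a)(t_j−u)^{a−2} and τ − s ≤ 2(t_j−u) for u ∈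 [t_i, s]. -/
/-!
By the tangent-line bound for the convex function `x ↦ x ^ (a - 1)`, the kernel increment
`(tj - u) ^ (a - 1) - (τ - u) ^ (a - 1)` is at most `(τ - tj) (1 - a) (tj - u) ^ (a - 2)`.
Split `(tj - u) ^ (a - 2) = (tj - u) ^ (ε - 1) (tj - u) ^ (a - 1 - ε)`: the first factor is
controlled by `τ - s ≤ 2 (tj - u)`, the second by `h ≤ tj - u`, and `τ - tj ≤ h`. What remains is
`∫_{ti}^{s} (s - u) ^ (a - 1) du = (s - ti) ^ a / a ≤ h ^ a / a`.
-/

open MeasureTheory intervalIntegral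

lemma rpow_sub_rpow_le_of_exponent_neg {p x y : ℝ} (hp : p < 0) (hx : 0 < x) (hxy : x ≤ y) :
    x ^ p - y ^ p ≤ (y - x) * (-p) * x ^ (p - 1) := by
  have h0 : (0 : ℝ) ∉ Set.uIcc x y := by
    rw [Set.uIcc_of_le hxy]
    exact fun h ↦ hx.not_ge h.1
  have hint : ∫ t in x..y, t ^ (p - 1) = (y ^ p - x ^ p) / p := by
    rw [integral_rpow (Or.inr ⟨by linarith, h0⟩), sub_add_cancel]
  have hmono : ∫ t in x..y, t ^ (p - 1) ≤ ∫ _ in x..y, x ^ (p - 1) :=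
    integral_mono_on hxy (intervalIntegrable_rpow (Or.inr h0)) intervalIntegrable_const
      fun t ht ↦ Real.rpow_le_rpow_of_nonpos hx ht.1 (by linarith)
  rw [hint, intervalIntegral.integral_const, smul_eq_mul, div_le_iff_of_neg hp] at hmono
  linarith

lemma rpow_sub_rpow_add_le {a ε h x d r : ℝ} (ha : a < 1) (hε : a - 1 ≤ ε) (hε1 : ε ≤ 1)
    (hh : 0 < h) (hhx : h ≤ x) (hd : 0 ≤ d) (hdh : d ≤ h) (hr : 0 < r) (hrx : r ≤ 2 * x) :
    x ^ (a - 1) - (x + d) ^ (a - 1) ≤ (1 - a) * 2 ^ (1 - ε) * h ^ (a - ε) * r ^ (ε - 1) := by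
  have hx : 0 < x := hh.trans_le hhx
  have htangent := rpow_sub_rpow_le_of_exponent_neg (p := a - 1) (by linarith) hx
    (le_add_of_nonneg_right hd)
  have hsplit : x ^ (a - 1 - 1) = x ^ (ε - 1) * x ^ (a - 1 - ε) := by
    rw [← Real.rpow_add hx]; ring_nf
  have hr2 : x ^ (ε - 1) ≤ (r / 2) ^ (ε - 1) :=
    Real.rpow_le_rpow_of_nonpos (by positivity) (by linarith) (by linarith)
  have hhx' : x ^ (a - 1 - ε) ≤ h ^ (a - 1 - ε) :=
    Real.rpow_le_rpow_of_nonpos hh hhx (by linarith)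
  have hdiv : (r / 2) ^ (ε - 1) = 2 ^ (1 - ε) * r ^ (ε - 1) := by
    rw [Real.div_rpow hr.le zero_le_two, div_eq_mul_inv, ← Real.rpow_neg zero_le_two, neg_sub,
      mul_comm]
  have hpow : h * h ^ (a - 1 - ε) = h ^ (a - ε) := by
    rw [show a - ε = 1 + (a - 1 - ε) by ring, Real.rpow_add hh, Real.rpow_one]
  calc x ^ (a - 1) - (x + d) ^ (a - 1)
      ≤ d * (1 - a) * (x ^ (ε - 1) * x ^ (a - 1 - ε)) := by
        rwa [add_sub_cancel_left, neg_sub, hsplit] at htangent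
    _ ≤ h * (1 - a) * ((r / 2) ^ (ε - 1) * h ^ (a - 1 - ε)) := by
        gcongr
    _ = (1 - a) * 2 ^ (1 - ε) * h ^ (a - ε) * r ^ (ε - 1) := by
        rw [hdiv, ← hpow]; ring

lemma integral_sub_rpow {a t s : ℝ} (ha : 0 < a) :
    ∫ u in t..s, (s - u) ^ (a - 1) = (s - t) ^ a / a := by
  rw [integral_comp_sub_left (fun v ↦ v ^ (a - 1)), sub_self,
    integral_rpow (Or.inl (by linarith)), sub_add_cancel, Real.zero_rpow ha.ne', sub_zero]

lemma intervalIntegrable_sub_rpow {a t s : ℝ} (ha : 0 < a) :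
    IntervalIntegrable (fun u ↦ (s - u) ^ (a - 1)) volume t s := by
  have hrpow := intervalIntegrable_rpow' (a := 0) (b := s - t) (by linarith : (-1 : ℝ) < a - 1)
  simpa using (hrpow.comp_sub_left s).symm

lemma integral_sub_rpow_mul_le {a t s K : ℝ} {f : ℝ → ℝ} (ha : 0 < a) (hts : t ≤ s)
    (hf : ContinuousOn f (Set.Icc t s)) (hfK : ∀ u ∈ Set.Icc t s, f u ≤ K) :
    ∫ u in t..s, (s - u) ^ (a - 1) * f u ≤ (s - t) ^ a / a * K := by
  have hkernel := intervalIntegrable_sub_rpow (s := s) (t := t) ha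
  rw [← integral_sub_rpow ha, ← intervalIntegral.integral_mul_const]
  refine integral_mono_on hts (hkernel.mul_continuousOn (by rwa [Set.uIcc_of_le hts]))
    (hkernel.mul_const K) fun u hu ↦ ?_
  exact mul_le_mul_of_nonneg_left (hfK u hu) (Real.rpow_nonneg (by linarith [hu.2]) _)

theorem stmt_14_general (a T ε : ℝ) (ha : 1 / 2 < a) (ha1 : a < 1)
    (hε : 0 < ε) (hε1 : ε < 2 * a - 1) :
    ∃ C > (0 : ℝ), ∀ h ti tj s τ : ℝ, 0 < h → 0 ≤ ti → 2 * h ≤ tj - ti →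
      ti < s → s ≤ ti + h → tj < τ → τ ≤ tj + h → τ ≤ T →
      (∫ u in ti..s, (s - u) ^ (a - 1) * ((tj - u) ^ (a - 1) - (τ - u) ^ (a - 1)))
        ≤ C * h ^ (2 * a - ε) * (τ - s) ^ (ε - 1) := by
  have ha0 : 0 < a := by linarith
  have h1a : 0 < 1 - a := by linarith
  refine ⟨(1 - a) * 2 ^ (1 - ε) / a, by positivity, ?_⟩
  intro h ti tj s τ hh _ hgap hs hsh hτ hτh _
  have hτs : 0 < τ - s := by linarith
  set K := (1 - a) * 2 ^ (1 - ε) * h ^ (a - ε) * (τ - s) ^ (ε - 1)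
  have hcont : ContinuousOn (fun u ↦ (tj - u) ^ (a - 1) - (τ - u) ^ (a - 1)) (Set.Icc ti s) :=
    fun u hu ↦ by
      have hkernel : ∀ c, u < c → ContinuousAt (fun v ↦ (c - v) ^ (a - 1)) u := fun c hc ↦
        (continuous_sub_left c).continuousAt.rpow_const (Or.inl (sub_pos.2 hc).ne')
      exact ((hkernel tj (by linarith [hu.2])).sub
        (hkernel τ (by linarith [hu.2]))).continuousWithinAt
  have hbound : ∀ u ∈ Set.Icc ti s, (tj - u) ^ (a - 1) - (τ - u) ^ (a - 1) ≤ K :=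
    fun u hu ↦ by
      have := rpow_sub_rpow_add_le (a := a) (ε := ε) (x := tj - u) (d := τ - tj) (r := τ - s)
        ha1 (by linarith) (by linarith) hh (by linarith [hu.2]) (by linarith) (by linarith)
        hτs (by linarith [hu.2])
      rwa [sub_add_sub_cancel'] at this
  calc _ ≤ (s - ti) ^ a / a * K := integral_sub_rpow_mul_le ha0 hs.le hcont hbound
    _ ≤ h ^ a / a * K := by
        have : 0 ≤ K := by positivity
        gcongr
        linarith
    _ = _ := by
        rw [show 2 * a - ε = a + (a - ε) by ring, Real.rpow_add hh]; ring

theorem stmt_14 (a T ε : ℝ) (ha : 1 / 2 < a) (ha1 : a < 1) (hT : 0 < T)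
    (hε : 0 < ε) (hε1 : ε < 2 * a - 1) :
    ∃ C > (0 : ℝ), ∀ h ti tj s τ : ℝ, 0 < h → 0 ≤ ti → 2 * h ≤ tj - ti →
      ti < s → s ≤ ti + h → tj < τ → τ ≤ tj + h → τ ≤ T →
      (∫ u in ti..s, (s - u) ^ (a - 1) * ((tj - u) ^ (a - 1) - (τ - u) ^ (a - 1)))
        ≤ C * h ^ (2 * a - ε) * (τ - s) ^ (ε - 1) :=
  stmt_14_general a T ε ha ha1 hε hε1
end
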